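/- arXiv:1307.7490 — 4 statements merged into one kernel-verified Lean document; each statement's English description precedes it below -/
import Mathlib

section
/- Let (X,B,m) be a σ-finite measure space, T:X→X an invertible, conservative, ergodic, measure-preserving transformation, and I∈B with 0<m(I)<∞. Suppose there are integers q_1<q_2<q_3<… and positive reals C_1 ≤ C_2 ≤ … with C_ν → ∞ and C_{ν+1} ≤ J·C_ν for all ν (for some constant J≥1), such that for m-a.e. x∈I and every ν≥1: C_ν ≤ Σ_{q_ν}(1_I)(x) ≤ 2C_ν. Define a_n := C_ν for q_ν ≤ n < q_{ν+1} (and a_n := C_1 for n < q_1). Then for m-a.e. x∈X, 1 ≤ liminf_{n→∞} Σ_n(1_I)(x)/a_n ≤ limsup_{n→∞} Σ_n(1_I)(x)/a_n ≤ 2J. (This is the key estimate showing that rank-one transformations with bounded cutting numbers satisfy property (☛).) -/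
/-!
At a point `y` of `I` where the bounds hold, `n ↦ Σ_n(1_I)(y)` is monotone, so on the block
`q ν ≤ n < q (ν + 1)` it lies between `Σ_{q ν} ≥ C ν = a n` and
`Σ_{q (ν + 1)} ≤ 2 C (ν + 1) ≤ 2 J a n`. Passing from `y = T^c x` back to `x` shifts the window
`[-n, n]` by `c`, which changes the sum by at most `|c|`, negligible against `a n → ∞`. By
ergodicity almost every orbit meets the set of such points `y`, which has positive measure.
-/

open MeasureTheory Filter Set Topology ENNReal

/-- The symmetric Birkhoff sum `Σ_n(1_A)(x) = Σ_{k=-n}^{n} 1_A(T^k x)`, valued in `ℝ≥0∞`. -/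
noncomputable def symSum {X : Type*} [MeasurableSpace X] (T : X ≃ᵐ X) (A : Set X)
    (n : ℕ) (x : X) : ℝ≥0∞ :=
  (∑ k ∈ Finset.range (n + 1), A.indicator (1 : X → ℝ≥0∞) ((⇑T)^[k] x))
    + ∑ k ∈ Finset.range n, A.indicator (1 : X → ℝ≥0∞) ((⇑T.symm)^[k + 1] x)

namespace MeasurableEquiv

variable {X : Type*} [MeasurableSpace X] (T : X ≃ᵐ X)

theorem coe_toEquiv_zpow_natCast (k : ℕ) : ⇑(T.toEquiv ^ (k : ℤ)) = (⇑T)^[k] := by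
  rw [zpow_natCast, Equiv.Perm.coe_pow]
  rfl

theorem coe_toEquiv_zpow_neg_natCast (k : ℕ) : ⇑(T.toEquiv ^ (-(k : ℤ))) = (⇑T.symm)^[k] := by
  rw [zpow_neg, zpow_natCast, ← inv_pow, Equiv.Perm.coe_pow]
  rfl

theorem measurable_toEquiv_zpow (c : ℤ) : Measurable ⇑(T.toEquiv ^ c) := by
  obtain ⟨k, rfl | rfl⟩ := Int.eq_nat_or_neg c
  · rw [coe_toEquiv_zpow_natCast]
    exact T.measurable.iterate k
  · rw [coe_toEquiv_zpow_neg_natCast]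
    exact T.symm.measurable.iterate k

end MeasurableEquiv

theorem Finset.sum_Icc_add_le_add_natAbs (g : ℤ → ℝ≥0∞) (hg : ∀ j, g j ≤ 1) (a b c : ℤ) :
    ∑ j ∈ Finset.Icc a b, g (j + c) ≤ ∑ j ∈ Finset.Icc a b, g j + c.natAbs := by
  set s := Finset.Icc a b
  set t := Finset.Icc (a + c) (b + c)
  have hshift : ∑ j ∈ s, g (j + c) = ∑ j ∈ t, g j := by
    rw [show t = s.map (addRightEmbedding c) from (Finset.map_add_right_Icc a b c).symm,
      Finset.sum_map]
    rfl
  have hnew : t \ s ⊆ Finset.Ioc b (b + c) ∪ Finset.Ico (a + c) a := by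
    intro j
    simp only [s, t, Finset.mem_sdiff, Finset.mem_union, Finset.mem_Icc, Finset.mem_Ioc,
      Finset.mem_Ico]
    omega
  have hcard : (t \ s).card ≤ c.natAbs := by
    refine (Finset.card_le_card hnew).trans ((Finset.card_union_le _ _).trans ?_)
    rw [Int.card_Ioc, Int.card_Ico]
    omega
  calc ∑ j ∈ s, g (j + c) = ∑ j ∈ t, g j := hshift
    _ ≤ ∑ j ∈ s ∪ (t \ s), g j :=
        Finset.sum_le_sum_of_subset
          (by rw [Finset.union_sdiff_self_eq_union]; exact Finset.subset_union_right)
    _ = ∑ j ∈ s, g j + ∑ j ∈ t \ s, g j := Finset.sum_union Finset.disjoint_sdiff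
    _ ≤ ∑ j ∈ s, g j + (t \ s).card := by
        gcongr
        simpa using Finset.sum_le_card_nsmul _ _ _ fun j _ => hg j
    _ ≤ ∑ j ∈ s, g j + c.natAbs := by gcongr

section symSum

variable {X : Type*} [MeasurableSpace X] (T : X ≃ᵐ X) (A : Set X)

theorem symSum_eq_sum_Icc (n : ℕ) (x : X) :
    symSum T A n x = ∑ j ∈ Finset.Icc (-(n : ℤ)) n, A.indicator 1 ((T.toEquiv ^ j) x) := by
  induction n with
  | zero => simp [symSum]
  | succ n ih =>
    have hIcc : Finset.Icc (-((n + 1 : ℕ) : ℤ)) (n + 1 : ℕ)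
        = insert (-((n + 1 : ℕ) : ℤ)) (insert ((n + 1 : ℕ) : ℤ) (Finset.Icc (-(n : ℤ)) n)) := by
      ext j
      simp only [Finset.mem_Icc, Finset.mem_insert]
      omega
    rw [hIcc, Finset.sum_insert (by simp only [Finset.mem_insert, Finset.mem_Icc]; omega),
      Finset.sum_insert (by simp only [Finset.mem_Icc]; omega), ← ih,
      T.coe_toEquiv_zpow_natCast, T.coe_toEquiv_zpow_neg_natCast]
    simp only [symSum, Finset.sum_range_succ]
    ring

theorem symSum_mono (x : X) : Monotone fun n => symSum T A n x := by
  intro n n' h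
  simp only [symSum_eq_sum_Icc]
  exact Finset.sum_le_sum_of_subset (Finset.Icc_subset_Icc (by omega) (by omega))

theorem symSum_toEquiv_zpow_apply_le (c : ℤ) (n : ℕ) (x : X) :
    symSum T A n ((T.toEquiv ^ c) x) ≤ symSum T A n x + c.natAbs := by
  simp only [symSum_eq_sum_Icc, ← Equiv.Perm.mul_apply, ← zpow_add]
  exact Finset.sum_Icc_add_le_add_natAbs (fun j => A.indicator 1 ((T.toEquiv ^ j) x))
    (fun _ => Set.indicator_le (fun _ _ => le_rfl) _) _ _ _

theorem symSum_le_symSum_toEquiv_zpow_apply_add (c : ℤ) (n : ℕ) (x : X) :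
    symSum T A n x ≤ symSum T A n ((T.toEquiv ^ c) x) + c.natAbs := by
  simpa only [zpow_neg, Equiv.Perm.inv_def, Equiv.symm_apply_apply, Int.natAbs_neg] using
    symSum_toEquiv_zpow_apply_le T A (-c) n ((T.toEquiv ^ c) x)

end symSum

theorem StrictMono.exists_le_lt_succ {q : ℕ → ℕ} (hq : StrictMono q) {n : ℕ} (hn : q 0 ≤ n) :
    ∃ ν, q ν ≤ n ∧ n < q (ν + 1) := by
  obtain ⟨ν, h₁, h₂⟩ := hq.exists_between_of_tendsto_atTop hq.tendsto_atTop (Nat.lt_succ_of_le hn)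
  exact ⟨ν, Nat.le_of_lt_succ h₁, h₂⟩

section StepFunction

variable {q : ℕ → ℕ} {C a : ℕ → ℝ}

theorem tendsto_atTop_of_step_eq (hq : StrictMono q) (hCmono : Monotone C)
    (hCtop : Tendsto C atTop atTop) (ha : ∀ ν n, q ν ≤ n → n < q (ν + 1) → a n = C ν) :
    Tendsto a atTop atTop := by
  have hle : ∀ μ n, q μ ≤ n → C μ ≤ a n := by
    intro μ n hμ
    obtain ⟨ν, h₁, h₂⟩ := hq.exists_le_lt_succ ((hq.monotone μ.zero_le).trans hμ)
    have hμν : μ ≤ ν := Nat.le_of_lt_succ (hq.lt_iff_lt.1 (hμ.trans_lt h₂))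
    exact (hCmono hμν).trans_eq (ha ν n h₁ h₂).symm
  refine tendsto_atTop.2 fun b => ?_
  obtain ⟨μ, hμ⟩ := (hCtop.eventually_ge_atTop b).exists
  filter_upwards [eventually_ge_atTop (q μ)] with n hn
  exact hμ.trans (hle μ n hn)

theorem Monotone.ofReal_le_and_le_mul_of_step_eq {S : ℕ → ℝ≥0∞} (hS : Monotone S)
    (hq : StrictMono q) {J : ℝ} (hJ : 0 ≤ J) (hCJ : ∀ ν, C (ν + 1) ≤ J * C ν)
    (hSq : ∀ ν, ENNReal.ofReal (C ν) ≤ S (q ν) ∧ S (q ν) ≤ ENNReal.ofReal (2 * C ν))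
    (ha : ∀ ν n, q ν ≤ n → n < q (ν + 1) → a n = C ν) {n : ℕ} (hn : q 0 ≤ n) :
    ENNReal.ofReal (a n) ≤ S n ∧ S n ≤ ENNReal.ofReal (2 * J) * ENNReal.ofReal (a n) := by
  obtain ⟨ν, h₁, h₂⟩ := hq.exists_le_lt_succ hn
  rw [ha ν n h₁ h₂, ← ENNReal.ofReal_mul (by positivity)]
  refine ⟨(hSq ν).1.trans (hS h₁), ?_⟩
  calc S n ≤ S (q (ν + 1)) := hS h₂.le
    _ ≤ ENNReal.ofReal (2 * C (ν + 1)) := (hSq (ν + 1)).2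
    _ ≤ ENNReal.ofReal (2 * J * C ν) := ENNReal.ofReal_le_ofReal (by linarith [hCJ ν])

theorem one_le_liminf_and_limsup_le_of_step_eq {S : ℕ → ℝ≥0∞} (hS : Monotone S)
    (hq : StrictMono q) {J : ℝ} (hJ : 0 ≤ J) (hCJ : ∀ ν, C (ν + 1) ≤ J * C ν)
    (hSq : ∀ ν, ENNReal.ofReal (C ν) ≤ S (q ν) ∧ S (q ν) ≤ ENNReal.ofReal (2 * C ν))
    (ha : ∀ ν n, q ν ≤ n → n < q (ν + 1) → a n = C ν) (ha_top : Tendsto a atTop atTop) :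
    1 ≤ liminf (fun n => S n / ENNReal.ofReal (a n)) atTop ∧
      limsup (fun n => S n / ENNReal.ofReal (a n)) atTop ≤ ENNReal.ofReal (2 * J) := by
  have hbounds : ∀ᶠ n in atTop, 1 ≤ S n / ENNReal.ofReal (a n) ∧
      S n / ENNReal.ofReal (a n) ≤ ENNReal.ofReal (2 * J) := by
    filter_upwards [eventually_ge_atTop (q 0), ha_top.eventually_gt_atTop 0] with n hn hapos
    obtain ⟨hlow, hup⟩ := hS.ofReal_le_and_le_mul_of_step_eq hq hJ hCJ hSq ha hn
    refine ⟨(ENNReal.le_div_iff_mul_le (.inl (ENNReal.ofReal_pos.2 hapos).ne')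
      (.inl ENNReal.ofReal_ne_top)).2 (by rwa [one_mul]),
      ENNReal.div_le_of_le_mul hup⟩
  exact ⟨le_liminf_of_le (by isBoundedDefault) (hbounds.mono fun _ => And.left),
    limsup_le_of_le (by isBoundedDefault) (hbounds.mono fun _ => And.right)⟩

end StepFunction

namespace ENNReal

variable {ι : Type*} {l : Filter ι} {f g b : ι → ℝ≥0∞} {K : ℝ≥0∞}

theorem tendsto_const_div_nhds_zero (hK : K ≠ ∞) (hb : Tendsto b l (𝓝 ∞)) :
    Tendsto (fun i => K / b i) l (𝓝 0) := by
  simpa using ENNReal.Tendsto.const_div hb (Or.inr hK)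

theorem liminf_div_le_liminf_div_of_le_add (hK : K ≠ ∞) (hb : Tendsto b l (𝓝 ∞))
    (hfg : ∀ i, f i ≤ g i + K) :
    liminf (fun i => f i / b i) l ≤ liminf (fun i => g i / b i) l :=
  calc liminf (fun i => f i / b i) l ≤ liminf ((fun i => g i / b i) + fun i => K / b i) l :=
        liminf_le_liminf (.of_forall fun i => by
          simpa only [Pi.add_apply, ENNReal.add_div] using ENNReal.div_le_div_right (hfg i) _)
    _ = liminf (fun i => g i / b i) l :=
        liminf_add_of_right_tendsto_zero (tendsto_const_div_nhds_zero hK hb) _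

theorem limsup_div_le_limsup_div_of_le_add (hK : K ≠ ∞) (hb : Tendsto b l (𝓝 ∞))
    (hfg : ∀ i, f i ≤ g i + K) :
    limsup (fun i => f i / b i) l ≤ limsup (fun i => g i / b i) l :=
  calc limsup (fun i => f i / b i) l ≤ limsup ((fun i => g i / b i) + fun i => K / b i) l :=
        limsup_le_limsup (.of_forall fun i => by
          simpa only [Pi.add_apply, ENNReal.add_div] using ENNReal.div_le_div_right (hfg i) _)
    _ = limsup (fun i => g i / b i) l :=
        limsup_add_of_right_tendsto_zero (tendsto_const_div_nhds_zero hK hb) _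

end ENNReal

namespace Ergodic

variable {X : Type*} [MeasurableSpace X] {m : Measure X} {T : X ≃ᵐ X}

theorem ae_exists_zpow_apply_mem (hE : Ergodic (⇑T) m) {s : Set X} (hs : MeasurableSet s)
    (hs0 : m s ≠ 0) : ∀ᵐ x ∂m, ∃ c : ℤ, (T.toEquiv ^ c) x ∈ s := by
  set orbit := {x | ∃ c : ℤ, (T.toEquiv ^ c) x ∈ s}
  have horbit : MeasurableSet orbit := by
    simp only [orbit, ofPred_exists]
    exact .iUnion fun c => T.measurable_toEquiv_zpow c hs
  have hshift : ∀ (c : ℤ) x, (T.toEquiv ^ c) (T x) = (T.toEquiv ^ (c + 1)) x := fun c x => by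
    rw [zpow_add_one, Equiv.Perm.mul_apply]
    rfl
  have hinv : ⇑T ⁻¹' orbit = orbit := by
    ext x
    simp only [orbit, mem_preimage, mem_ofPred_eq, hshift]
    exact ⟨fun ⟨c, hc⟩ => ⟨c + 1, hc⟩, fun ⟨c, hc⟩ => ⟨c - 1, by rwa [sub_add_cancel]⟩⟩
  refine (hE.ae_mem_or_ae_notMem horbit hinv).resolve_right fun hnull => hs0 ?_
  exact measure_eq_zero_iff_ae_notMem.2 (hnull.mono fun x hx hxs => hx ⟨0, by simpa using hxs⟩)

theorem ae_exists_zpow_apply_of_ae_restrict (hE : Ergodic (⇑T) m) {s : Set X}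
    (hs : MeasurableSet s) (hs0 : m s ≠ 0) {p : X → Prop} (hp : ∀ᵐ x ∂m.restrict s, p x) :
    ∀ᵐ x ∂m, ∃ c : ℤ, p ((T.toEquiv ^ c) x) := by
  obtain ⟨t, ht, htm, hpt⟩ := ((ae_restrict_iff' hs).1 hp).exists_measurable_mem
  refine (hE.ae_exists_zpow_apply_mem (hs.inter htm) ?_).mono fun x ⟨c, hc⟩ => ⟨c, hpt _ hc.2 hc.1⟩
  rwa [measure_inter_conull ht]

end Ergodic

theorem rank_one_bounded_cuts_property_general
    {X : Type*} [MeasurableSpace X] (m : Measure X)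
    (T : X ≃ᵐ X) (hE : Ergodic (⇑T) m)
    (I : Set X) (hI : MeasurableSet I) (hI0 : 0 < m I)
    (q : ℕ → ℕ) (hq : StrictMono q)
    (C : ℕ → ℝ) (hCmono : Monotone C)
    (hCtop : Tendsto C atTop atTop)
    (J : ℝ) (hJ : 1 ≤ J) (hCJ : ∀ ν, C (ν + 1) ≤ J * C ν)
    (hbound : ∀ᵐ x ∂(m.restrict I), ∀ ν,
      ENNReal.ofReal (C ν) ≤ symSum T I (q ν) x ∧
      symSum T I (q ν) x ≤ ENNReal.ofReal (2 * C ν))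
    (a : ℕ → ℝ)
    (ha : ∀ ν n, q ν ≤ n → n < q (ν + 1) → a n = C ν) :
    ∀ᵐ x ∂m,
      (1 : ℝ≥0∞) ≤ liminf (fun n => symSum T I n x / ENNReal.ofReal (a n)) atTop ∧
      liminf (fun n => symSum T I n x / ENNReal.ofReal (a n)) atTop ≤
        limsup (fun n => symSum T I n x / ENNReal.ofReal (a n)) atTop ∧
      limsup (fun n => symSum T I n x / ENNReal.ofReal (a n)) atTop ≤
        ENNReal.ofReal (2 * J) := by
  have ha_top := tendsto_atTop_of_step_eq hq hCmono hCtop ha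
  have hb := ENNReal.tendsto_ofReal_atTop.comp ha_top
  filter_upwards [hE.ae_exists_zpow_apply_of_ae_restrict hI hI0.ne' hbound] with x ⟨c, hy⟩
  obtain ⟨hlow, hup⟩ := one_le_liminf_and_limsup_le_of_step_eq
    (symSum_mono T I ((T.toEquiv ^ c) x)) hq (by linarith) hCJ hy ha ha_top
  have hK : (c.natAbs : ℝ≥0∞) ≠ ∞ := ENNReal.natCast_ne_top _
  refine ⟨hlow.trans (ENNReal.liminf_div_le_liminf_div_of_le_add hK hb
      fun n => symSum_toEquiv_zpow_apply_le T I c n x), liminf_le_limsup,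
    (ENNReal.limsup_div_le_limsup_div_of_le_add hK hb
      fun n => symSum_le_symSum_toEquiv_zpow_apply_add T I c n x).trans hup⟩

/-- Theorem 3 (key estimate): if heights `q_ν` and constants `C_ν` (nondecreasing,
`C_{ν+1} ≤ J·C_ν`, `C_ν → ∞`) satisfy `C_ν ≤ Σ_{q_ν}(1_I)(x) ≤ 2C_ν` a.e. on `I`, then with
`a_n := C_ν` for `q_ν ≤ n < q_{ν+1}`, a.e. `1 ≤ liminf Σ_n(1_I)/a_n ≤ limsup Σ_n(1_I)/a_n ≤ 2J`. -/
theorem rank_one_bounded_cuts_property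
    {X : Type*} [MeasurableSpace X] (m : Measure X) [SigmaFinite m]
    (T : X ≃ᵐ X) (hE : Ergodic (⇑T) m) (hC : Conservative (⇑T) m)
    (I : Set X) (hI : MeasurableSet I) (hI0 : 0 < m I) (hI1 : m I < ∞)
    (q : ℕ → ℕ) (hq : StrictMono q)
    (C : ℕ → ℝ) (hCpos : ∀ ν, 0 < C ν) (hCmono : Monotone C)
    (hCtop : Tendsto C atTop atTop)
    (J : ℝ) (hJ : 1 ≤ J) (hCJ : ∀ ν, C (ν + 1) ≤ J * C ν)
    (hbound : ∀ᵐ x ∂(m.restrict I), ∀ ν,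
      ENNReal.ofReal (C ν) ≤ symSum T I (q ν) x ∧
      symSum T I (q ν) x ≤ ENNReal.ofReal (2 * C ν))
    (a : ℕ → ℝ)
    (ha : ∀ ν n, q ν ≤ n → n < q (ν + 1) → a n = C ν)
    (ha0 : ∀ n, n < q 0 → a n = C 0) :
    ∀ᵐ x ∂m,
      (1 : ℝ≥0∞) ≤ liminf (fun n => symSum T I n x / ENNReal.ofReal (a n)) atTop ∧
      liminf (fun n => symSum T I n x / ENNReal.ofReal (a n)) atTop ≤
        limsup (fun n => symSum T I n x / ENNReal.ofReal (a n)) atTop ∧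
      limsup (fun n => symSum T I n x / ENNReal.ofReal (a n)) atTop ≤
        ENNReal.ofReal (2 * J) :=
  rank_one_bounded_cuts_property_general m T hE I hI hI0 q hq C hCmono hCtop J hJ hCJ hbound a ha
end

section
/- Let (X,B,m) be a σ-finite measure space with m(X)=∞ and T:X→X an invertible, conservative, ergodic, measure-preserving transformation, and let (a_n) be positive constants. Assume T is weakly pointwise dual ergodic with return sequence (a_n), i.e. for every f∈L¹(m) with f≥0: (1/a_n)·S_n^{(T^{-1})}(f) → ∫f dm in measure on every set of finite measure, and limsup_{n→∞} (1/a_n)·S_n^{(T^{-1})}(f) = ∫f dm a.e. (for invertible T the dual operator satisfies T̂f = f∘T^{-1}). Assume moreover that there exists α<∞ such that for every f∈L¹(m) with f≥0, limsup_{n→∞} (1/a_n)·S_n(f) = α·∫f dm a.e. Then the sequence (a_n) has extended regular variation with Karamata indices 1: there exist M>1 and a function N:ℕ→ℕ such that for every integer p≥1 and every n≥N(p), (1/M)·p·a_n ≤ a_{pn} ≤ M·p·a_n. -/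
open MeasureTheory Filter Set Topology ENNReal

/-- One-sided Birkhoff sum `S_n(f) = Σ_{k=0}^{n-1} f∘T^k` for `ℝ≥0∞`-valued `f`. -/
noncomputable def fwdSumF {X : Type*} (T : X → X) (f : X → ℝ≥0∞) (n : ℕ) (x : X) : ℝ≥0∞ :=
  ∑ k ∈ Finset.range n, f (T^[k] x)

/-!
Fix `A` with `0 < m A < ∞` and a precision `δ`. By Egorov's theorem applied to the a.e. limsup,
there is `B ⊆ A` of almost full measure on which `S_n^{T⁻¹}(1_A) ≤ (1 + δ) m(A) a_n` uniformly for
`n ≥ K`; convergence in measure on `B` bounds `S_n^{T⁻¹}(1_B)` from below off a small set. Hence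
the correlation sums `v(n) = ∫_B S_n^{T⁻¹}(1_B) = Σ_{k<n} m(B ∩ T^{-k} B)` satisfy
`v(n) = (1 ± O(δ)) m(A)² a_n`. As `v` is nondecreasing, `a` is almost monotone, and cutting an orbit
segment at its first (or last) visit to `B` turns the bound on `B` into the bound
`S_n(1_B) ≤ (1 + O(δ)) m(A) a_n + K` everywhere, for `T` and for `T⁻¹`. Conservativity forces
`a_n → ∞`, which absorbs `K`.

Splitting a window of length `pn` into `p` windows of length `n` and integrating over `B` gives
`a_{pn} ≲ p a_n`. A backward and a forward window of length `n` at `x` make up one forward window of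
length `2n - 1`; integrating this over `B`, where both halves have integral `v(n)` by invariance,
gives `a_{2n} ≳ 2 a_n`. Iterating the doubling `log₂ p` times at precision `δ ≈ 1 / log₂ p` and
using almost monotonicity gives `a_{pn} ≳ p a_n`.
-/

section

variable {X : Type*}

noncomputable def visitCount (g : X → X) (P : Set X) (n : ℕ) (x : X) : ℕ :=
  ∑ k ∈ Finset.range n, P.indicator 1 (g^[k] x)

section Combinatorics

variable (g : X → X) (P : Set X)

@[simp]
lemma visitCount_zero (x : X) : visitCount g P 0 x = 0 := rfl

lemma visitCount_succ (n : ℕ) (x : X) :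
    visitCount g P (n + 1) x = visitCount g P n x + P.indicator 1 (g^[n] x) :=
  Finset.sum_range_succ _ _

lemma visitCount_add (n k : ℕ) (x : X) :
    visitCount g P (n + k) x = visitCount g P n x + visitCount g P k (g^[n] x) := by
  simp only [visitCount, Finset.sum_range_add, ← Function.iterate_add_apply, add_comm _ n]

lemma visitCount_mul (p n : ℕ) (x : X) :
    visitCount g P (p * n) x = ∑ j ∈ Finset.range p, visitCount g P n (g^[j * n] x) := by
  induction p with
  | zero => simp
  | succ p ih => rw [add_mul, one_mul, visitCount_add, ih, Finset.sum_range_succ]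

lemma visitCount_mono (x : X) : Monotone (visitCount g P · x) := fun _ _ h =>
  Finset.sum_le_sum_of_subset (Finset.range_subset_range.mpr h)

lemma visitCount_le (n : ℕ) (x : X) : visitCount g P n x ≤ n :=
  (Finset.sum_le_card_nsmul _ _ 1 fun _ _ =>
    Set.indicator_le_self' (fun _ _ => zero_le_one) _).trans_eq (by simp)

variable {P} in
lemma visitCount_mono_set {Q : Set X} (h : P ⊆ Q) (n : ℕ) (x : X) :
    visitCount g P n x ≤ visitCount g Q n x :=
  Finset.sum_le_sum fun _ _ => Set.indicator_le_indicator_of_subset h (fun _ => Nat.zero_le _) _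

lemma visitCount_eq_zero_or_exists_first (n : ℕ) (x : X) :
    visitCount g P n x = 0 ∨
      ∃ k < n, g^[k] x ∈ P ∧ visitCount g P n x = visitCount g P (n - k) (g^[k] x) := by
  induction n generalizing x with
  | zero => simp
  | succ n ih =>
    by_cases hx : x ∈ P
    · exact Or.inr ⟨0, n.succ_pos, hx, rfl⟩
    have hshift : visitCount g P (n + 1) x = visitCount g P n (g x) := by
      rw [add_comm, visitCount_add]
      simp [visitCount, hx]
    rcases ih (g x) with h | ⟨k, hk, hkP, heq⟩
    · exact Or.inl (hshift.trans h)
    · refine Or.inr ⟨k + 1, by omega, hkP, ?_⟩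
      rw [hshift, heq, Function.iterate_succ_apply]
      congr 1
      omega

variable {g} {g' : X → X}

lemma visitCount_succ_eq_of_leftInverse (h : Function.LeftInverse g' g) (n : ℕ) (x : X) :
    visitCount g P (n + 1) x = visitCount g' P (n + 1) (g^[n] x) := by
  induction n generalizing x with
  | zero => rfl
  | succ n ih =>
    calc visitCount g P (n + 1 + 1) x
        = P.indicator 1 x + visitCount g' P (n + 1) (g^[n + 1] x) := by
          rw [add_comm, visitCount_add, ih, Function.iterate_one, ← Function.iterate_succ_apply]
          simp [visitCount]
      _ = visitCount g' P (n + 1 + 1) (g^[n + 1] x) := by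
          rw [visitCount_succ g' P (n + 1), h.iterate (n + 1), add_comm]

lemma visitCount_eq_zero_or_exists_last (h : Function.LeftInverse g' g) (n : ℕ) (x : X) :
    visitCount g P n x = 0 ∨
      ∃ k < n, g^[k] x ∈ P ∧ visitCount g P n x = visitCount g' P (k + 1) (g^[k] x) := by
  induction n with
  | zero => simp
  | succ n ih =>
    by_cases hn : g^[n] x ∈ P
    · exact Or.inr ⟨n, n.lt_succ_self, hn, visitCount_succ_eq_of_leftInverse P h n x⟩
    rw [visitCount_succ, Set.indicator_of_notMem hn, add_zero]
    rcases ih with h0 | ⟨k, hk, hkP, heq⟩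
    · exact Or.inl h0
    · exact Or.inr ⟨k, by omega, hkP, heq⟩

lemma visitCount_add_visitCount (h : Function.LeftInverse g' g) (h' : Function.RightInverse g' g)
    (n : ℕ) (x : X) :
    visitCount g' P (n + 1) x + visitCount g P (n + 1) x
      = visitCount g P (2 * n + 1) (g'^[n] x) + P.indicator 1 x := by
  have hx : g^[n] (g'^[n] x) = x := h'.iterate n x
  have hreflect : visitCount g' P (n + 1) x = visitCount g P (n + 1) (g'^[n] x) := by
    rw [visitCount_succ_eq_of_leftInverse P h, hx]
  rw [show 2 * n + 1 = n + (n + 1) by ring, visitCount_add g P n (n + 1), hx, hreflect,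
    visitCount_succ, hx]
  ring

lemma tendsto_visitCount_atTop {x : X} (h : ∃ᶠ k in atTop, g^[k] x ∈ P) :
    Tendsto (visitCount g P · x) atTop atTop := by
  refine tendsto_atTop_atTop_of_monotone (visitCount_mono g P x) fun C => ?_
  induction C with
  | zero => exact ⟨0, le_rfl⟩
  | succ C ih =>
    obtain ⟨n, hn⟩ := ih
    obtain ⟨k, hkP, hkn⟩ := (h.and_eventually (eventually_ge_atTop n)).exists
    refine ⟨k + 1, ?_⟩
    rw [visitCount_succ, Set.indicator_of_mem hkP, Pi.one_apply]
    exact Nat.succ_le_succ (hn.trans (visitCount_mono g P x hkn))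

end Combinatorics

lemma Nat.cast_visitCount {R : Type*} [AddCommMonoidWithOne R] (g : X → X) (P : Set X) (n : ℕ)
    (x : X) :
    (visitCount g P n x : R) = ∑ k ∈ Finset.range n, (g^[k] ⁻¹' P).indicator 1 x := by
  simp only [visitCount, Nat.cast_sum]
  refine Finset.sum_congr rfl fun k _ => ?_
  by_cases hk : g^[k] x ∈ P <;> simp [hk]

lemma fwdSumF_indicator_one (g : X → X) (P : Set X) (n : ℕ) (x : X) :
    fwdSumF g (P.indicator 1) n x = visitCount g P n x :=
  (Nat.cast_visitCount g P n x).symm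

section Measure

variable [MeasurableSpace X] {m : Measure X} {g : X → X} {P B : Set X}

lemma measurable_visitCount (hg : Measurable g) (hP : MeasurableSet P) (n : ℕ) :
    Measurable fun x => (visitCount g P n x : ℝ) := by
  simp only [Nat.cast_visitCount]
  exact Finset.measurable_sum _ fun k _ =>
    measurable_const.indicator (hP.preimage (hg.iterate k))

lemma integrableOn_visitCount (hg : Measurable g) (hP : MeasurableSet P) (hB : m B ≠ ∞) (n : ℕ) :
    IntegrableOn (fun x => (visitCount g P n x : ℝ)) B m :=
  Measure.integrableOn_of_bounded (M := n) hB
    (measurable_visitCount hg hP n).aestronglyMeasurable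
    (ae_of_all _ fun x => by simpa using visitCount_le g P n x)

lemma setIntegral_visitCount (hg : Measurable g) (hP : MeasurableSet P) (hB : m B ≠ ∞) (n : ℕ) :
    ∫ x in B, (visitCount g P n x : ℝ) ∂m = ∑ k ∈ Finset.range n, m.real (g^[k] ⁻¹' P ∩ B) := by
  have hPk (k : ℕ) : MeasurableSet (g^[k] ⁻¹' P) := hP.preimage (hg.iterate k)
  simp only [Nat.cast_visitCount]
  rw [integral_finsetSum _ fun k _ => ?_]
  · exact Finset.sum_congr rfl fun k _ => by
      rw [integral_indicator_one (hPk k), measureReal_restrict_apply (hPk k)]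
  · have : IsFiniteMeasure (m.restrict B) := isFiniteMeasure_restrict.mpr hB
    exact (integrable_const 1).indicator (hPk k)

lemma setIntegral_visitCount_le (hg : Measurable g) (hP : MeasurableSet P) (hBm : MeasurableSet B)
    (hB : m B ≠ ∞) {n : ℕ} {R : ℝ} (h : ∀ x ∈ B, (visitCount g P n x : ℝ) ≤ R) :
    ∫ x in B, (visitCount g P n x : ℝ) ∂m ≤ m.real B * R := by
  have : IsFiniteMeasure (m.restrict B) := isFiniteMeasure_restrict.mpr hB
  calc ∫ x in B, (visitCount g P n x : ℝ) ∂m ≤ ∫ _ in B, R ∂m :=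
        setIntegral_mono_on (integrableOn_visitCount hg hP hB n) (integrable_const R) hBm h
    _ = m.real B * R := by rw [setIntegral_const, smul_eq_mul]

lemma setIntegral_visitCount_symm {T : X ≃ᵐ X} (hT : MeasurePreserving T m m)
    (hBm : MeasurableSet B) (hB : m B ≠ ∞) (n : ℕ) :
    ∫ x in B, (visitCount T.symm B n x : ℝ) ∂m = ∫ x in B, (visitCount T B n x : ℝ) ∂m := by
  rw [setIntegral_visitCount (hT.symm T).measurable hBm hB,
    setIntegral_visitCount hT.measurable hBm hB]
  refine Finset.sum_congr rfl fun k _ => ?_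
  have hpre : (⇑T)^[k] ⁻¹' ((⇑T.symm)^[k] ⁻¹' B ∩ B) = B ∩ (⇑T)^[k] ⁻¹' B := by
    ext y
    simp [Function.LeftInverse.iterate (fun z => T.symm_apply_apply z) k y]
  rw [← (hT.iterate k).measureReal_preimage
    ((hBm.preimage ((hT.symm T).measurable.iterate k)).inter hBm).nullMeasurableSet, hpre,
    Set.inter_comm]

lemma MeasureTheory.Conservative.symm {e : X ≃ᵐ X} (h : Conservative e m)
    (he : Measure.QuasiMeasurePreserving e.symm m m) : Conservative e.symm m := by
  refine ⟨he, fun s hs hs0 => ?_⟩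
  obtain ⟨x, hx, k, hk, hkx⟩ := h.exists_mem_iterate_mem hs.nullMeasurableSet hs0
  exact ⟨_, hkx, k, hk, by rwa [Function.LeftInverse.iterate (fun z => e.symm_apply_apply z) k x]⟩

lemma MeasureTheory.Conservative.ae_tendsto_visitCount (h : Conservative g m)
    (hP : MeasurableSet P) :
    ∀ᵐ x ∂m, x ∈ P → Tendsto (visitCount g P · x) atTop atTop := by
  filter_upwards [h.ae_mem_imp_frequently_image_mem hP.nullMeasurableSet] with x hx hxP
  exact tendsto_visitCount_atTop P (hx hxP)

lemma tendsto_measure_inter_setOf_forall_ge {A : Set X} {p : ℕ → X → Prop}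
    (h : ∀ᵐ x ∂m, x ∈ A → ∀ᶠ n in atTop, p n x) :
    Tendsto (fun K => m (A ∩ {x | ∀ n, K ≤ n → p n x})) atTop (𝓝 (m A)) := by
  have hmono : Monotone fun K => A ∩ {x | ∀ n, K ≤ n → p n x} := fun K K' hK x hx =>
    ⟨hx.1, fun n hn => hx.2 n (hK.trans hn)⟩
  have hunion : m (⋃ K, A ∩ {x | ∀ n, K ≤ n → p n x}) = m A := by
    refine le_antisymm (measure_mono (Set.iUnion_subset fun K => Set.inter_subset_left))
      (measure_mono_ae ?_)
    filter_upwards [h] with x hx hxA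
    obtain ⟨K, hK⟩ := eventually_atTop.mp (hx hxA)
    exact Set.mem_iUnion.mpr ⟨K, hxA, hK⟩
  exact hunion ▸ tendsto_measure_iUnion_atTop hmono

lemma mul_sub_le_setIntegral {f : X → ℝ} (hBm : MeasurableSet B) (hB : m B ≠ ∞)
    (hf : IntegrableOn f B m) (hf0 : ∀ x ∈ B, 0 ≤ f x) {c η : ℝ} (hc : 0 ≤ c)
    (hbad : m.real (B ∩ {x | f x < c}) ≤ η) :
    c * (m.real B - η) ≤ ∫ x in B, f x ∂m := by
  have hgood : m.real B - η ≤ m.real ({x | c ≤ f x} ∩ B) := by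
    have : m.real B ≤ m.real ({x | c ≤ f x} ∩ B) + m.real (B ∩ {x | f x < c}) :=
      (measureReal_mono (fun x hx => (le_or_gt c (f x)).imp (⟨·, hx⟩) (⟨hx, ·⟩))
        (measure_union_ne_top (measure_inter_ne_top_of_right_ne_top hB)
          (measure_inter_ne_top_of_left_ne_top hB))).trans (measureReal_union_le _ _)
    linarith
  calc c * (m.real B - η) ≤ c * m.real ({x | c ≤ f x} ∩ B) := mul_le_mul_of_nonneg_left hgood hc
    _ = c * (m.restrict B).real {x | c ≤ f x} := by rw [measureReal_restrict_apply' hBm]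
    _ ≤ ∫ x in B, f x ∂m :=
      mul_meas_ge_le_integral_of_nonneg (ae_restrict_of_forall_mem hBm hf0) hf c

end Measure

lemma ENNReal.ofReal_sub_add_ofReal_sub {x y : ℝ} (hx : 0 ≤ x) (hy : 0 ≤ y) :
    (ENNReal.ofReal x - ENNReal.ofReal y) + (ENNReal.ofReal y - ENNReal.ofReal x)
      = ENNReal.ofReal |x - y| := by
  rw [← ENNReal.ofReal_sub _ hy, ← ENNReal.ofReal_sub _ hx]
  rcases le_total x y with h | h
  · rw [ENNReal.ofReal_of_nonpos (sub_nonpos.mpr h), zero_add, abs_sub_comm,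
      abs_of_nonneg (sub_nonneg.mpr h)]
  · rw [ENNReal.ofReal_of_nonpos (sub_nonpos.mpr h), add_zero, abs_of_nonneg (sub_nonneg.mpr h)]

lemma eventually_visitCount_le_of_limsup_lt {g : X → X} {A : Set X} {a : ℕ → ℝ}
    (hapos : ∀ n, 0 < a n) {x : X} {L : ℝ}
    (h : limsup (fun n => fwdSumF g (A.indicator 1) n x / ENNReal.ofReal (a n)) atTop
      < ENNReal.ofReal L) :
    ∀ᶠ n in atTop, (visitCount g A n x : ℝ) ≤ L * a n := by
  filter_upwards [eventually_lt_of_limsup_lt h] with n hn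
  rw [fwdSumF_indicator_one, ← ENNReal.ofReal_natCast, ← ENNReal.ofReal_div_of_pos (hapos n),
    ENNReal.ofReal_lt_ofReal_iff', div_lt_iff₀ (hapos n)] at hn
  exact hn.1.le

section ReturnSequence

variable [MeasurableSpace X] {m : Measure X} {g : X → X} {a : ℕ → ℝ} {A B : Set X}

lemma tendsto_measure_le_abs_visitCount_sub (hapos : ∀ n, 0 < a n) (hBm : MeasurableSet B)
    (hB : m B ≠ ∞) {E : Set X} {η : ℝ}
    (h : Tendsto (fun n => m (E ∩ {x | ENNReal.ofReal η ≤
        (fwdSumF g (B.indicator 1) n x / ENNReal.ofReal (a n) - ∫⁻ y, B.indicator 1 y ∂m) +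
        ((∫⁻ y, B.indicator 1 y ∂m) - fwdSumF g (B.indicator 1) n x / ENNReal.ofReal (a n))}))
      atTop (𝓝 0)) :
    Tendsto (fun n => m (E ∩ {x | η * a n ≤ |(visitCount g B n x : ℝ) - m.real B * a n|}))
      atTop (𝓝 0) := by
  refine tendsto_of_tendsto_of_tendsto_of_le_of_le tendsto_const_nhds h (fun _ => by simp)
    fun n => measure_mono (Set.inter_subset_inter_right _ fun x hx => ?_)
  simp only [Set.mem_ofPred_eq, lintegral_indicator_one hBm, fwdSumF_indicator_one] at hx ⊢
  rw [← ofReal_measureReal hB, ← ENNReal.ofReal_natCast, ← ENNReal.ofReal_div_of_pos (hapos n),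
    ENNReal.ofReal_sub_add_ofReal_sub (div_nonneg (Nat.cast_nonneg _) (hapos n).le)
      measureReal_nonneg]
  refine ENNReal.ofReal_le_ofReal ?_
  have hdiv : (visitCount g B n x : ℝ) / a n - m.real B
      = ((visitCount g B n x : ℝ) - m.real B * a n) / a n := by
    field_simp [(hapos n).ne']
  rwa [hdiv, abs_div, abs_of_pos (hapos n), le_div_iff₀ (hapos n)]

lemma tendsto_atTop_of_tendsto_visitCount (hA : m A ≠ 0) (hA' : m A ≠ ∞)
    (hrec : ∀ᵐ x ∂m, x ∈ A → Tendsto (visitCount g A · x) atTop atTop)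
    (hdev : Tendsto (fun n => m (A ∩ {x | m.real A * a n ≤
      |(visitCount g A n x : ℝ) - m.real A * a n|})) atTop (𝓝 0)) :
    Tendsto a atTop atTop := by
  set c := m.real A
  by_contra hna
  obtain ⟨b, hb⟩ : ∃ b, ∃ᶠ n in atTop, a n < b := by
    simpa [tendsto_atTop, Filter.not_eventually, Filter.frequently_atTop] using hna
  have hlarge : ∀ᵐ x ∂m, x ∈ A → ∀ᶠ n in atTop, 2 * c * b ≤ (visitCount g A n x : ℝ) := by
    filter_upwards [hrec] with x hx hxA
    exact (tendsto_natCast_atTop_atTop.comp (hx hxA)).eventually_ge_atTop _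
  have hhalf : m A / 2 < m A := ENNReal.half_lt_self hA hA'
  obtain ⟨K, hK⟩ := eventually_atTop.mp
    ((tendsto_measure_inter_setOf_forall_ge hlarge).eventually_const_lt hhalf)
  obtain ⟨n, ⟨hnb, hn⟩, hKn⟩ := ((hb.and_eventually
    (hdev.eventually_lt_const (ENNReal.half_pos hA))).and_eventually
    (eventually_ge_atTop K)).exists
  refine (hK K le_rfl).not_ge (hn.le.trans' (measure_mono fun x hx => ⟨hx.1, ?_⟩))
  have hv := hx.2 n hKn
  have hc : 0 ≤ c := measureReal_nonneg
  rw [Set.mem_ofPred_eq, abs_of_nonneg (by nlinarith)]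
  nlinarith

/-- A precision-`δ` Egorov set for weak dual ergodicity: a subset `B ⊆ A` on which both the limsup
bound for the visits to `A` and the convergence in measure of the visits to `B` hold uniformly
from time `K` on. -/
structure IsGoodSet (m : Measure X) (g : X → X) (a : ℕ → ℝ) (A B : Set X) (δ : ℝ) (K : ℕ) :
    Prop where
  measurableSet : MeasurableSet B
  subset : B ⊆ A
  le_measureReal : (1 - δ) * m.real A ≤ m.real B
  visitCount_le_of_mem : ∀ x ∈ B, ∀ n, K ≤ n → (visitCount g A n x : ℝ) ≤ (1 + δ) * m.real A * a n
  measureReal_le : ∀ n, K ≤ n →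
    m.real (B ∩ {x | (visitCount g B n x : ℝ) < (m.real B - δ * m.real A) * a n})
      ≤ δ * m.real A

lemma exists_isGoodSet (hg : Measurable g) (hAm : MeasurableSet A) (hA : m A ≠ ∞)
    (hc : 0 < m.real A)
    (hsup : ∀ L, m.real A < L → ∀ᵐ x ∂m, ∀ᶠ n in atTop, (visitCount g A n x : ℝ) ≤ L * a n)
    (hdev : ∀ B, MeasurableSet B → m B ≠ ∞ → ∀ η, 0 < η → Tendsto (fun n => m (B ∩
      {x | η * a n ≤ |(visitCount g B n x : ℝ) - m.real B * a n|})) atTop (𝓝 0))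
    {δ : ℝ} (hδ : 0 < δ) : ∃ B K, IsGoodSet m g a A B δ K := by
  set c := m.real A
  have hegorov := tendsto_measure_inter_setOf_forall_ge (m := m) (A := A)
    (p := fun n x => (visitCount g A n x : ℝ) ≤ (1 + δ) * c * a n)
    ((hsup _ (by nlinarith)).mono fun x hx _ => hx)
  have hlt : ENNReal.ofReal ((1 - δ) * c) < m A := by
    rw [← ofReal_measureReal hA]
    exact (ENNReal.ofReal_lt_ofReal_iff hc).2 (by nlinarith)
  obtain ⟨K₀, hK₀⟩ := (hegorov.eventually_const_lt hlt).exists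
  set B := A ∩ {x | ∀ n, K₀ ≤ n → (visitCount g A n x : ℝ) ≤ (1 + δ) * c * a n}
  have hBm : MeasurableSet B := hAm.inter <| measurableSet_setOfPred.2 <|
    Measurable.forall fun n => measurable_const.imp
      (measurableSet_le (measurable_visitCount hg hAm n) measurable_const).mem
  have hB : m B ≠ ∞ := ((measure_mono Set.inter_subset_left).trans_lt hA.lt_top).ne
  obtain ⟨K₁, hK₁⟩ := eventually_atTop.mp <|
    (hdev B hBm hB (δ * c) (by positivity)).eventually_lt_const
      (ENNReal.ofReal_pos.2 (by positivity : 0 < δ * c))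
  refine ⟨B, max K₀ K₁, hBm, Set.inter_subset_left,
    (ENNReal.ofReal_le_iff_le_toReal hB).mp hK₀.le,
    fun x hx n hn => hx.2 n (le_of_max_le_left hn), fun n hn => ?_⟩
  refine ENNReal.toReal_le_of_le_ofReal (by positivity)
    ((measure_mono (Set.inter_subset_inter_right _ fun x hx => ?_)).trans
      (hK₁ n (le_of_max_le_right hn)).le)
  rw [Set.mem_ofPred_eq] at hx ⊢
  calc δ * c * a n ≤ m.real B * a n - visitCount g B n x := by linarith
    _ ≤ _ := by rw [abs_sub_comm]; exact le_abs_self _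

namespace IsGoodSet

variable {δ : ℝ} {K : ℕ}

lemma measure_ne_top (hB : IsGoodSet m g a A B δ K) (hA : m A ≠ ∞) : m B ≠ ∞ :=
  ((measure_mono hB.subset).trans_lt hA.lt_top).ne

lemma sq_mul_le_setIntegral (hB : IsGoodSet m g a A B δ K) (hg : Measurable g) (hA : m A ≠ ∞)
    (hapos : ∀ n, 0 < a n) (hδ : δ ≤ 1 / 2) {n : ℕ} (hn : K ≤ n) :
    ((1 - 2 * δ) * m.real A) ^ 2 * a n ≤ ∫ x in B, (visitCount g B n x : ℝ) ∂m := by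
  have hB' := hB.measure_ne_top hA
  have hc : 0 ≤ (1 - 2 * δ) * m.real A := mul_nonneg (by linarith) measureReal_nonneg
  have hβ : (1 - 2 * δ) * m.real A ≤ m.real B - δ * m.real A := by linarith [hB.le_measureReal]
  calc ((1 - 2 * δ) * m.real A) ^ 2 * a n
      ≤ (m.real B - δ * m.real A) * a n * (m.real B - δ * m.real A) := by
        have := mul_le_mul hβ hβ hc (hc.trans hβ)
        nlinarith [hapos n]
    _ ≤ ∫ x in B, (visitCount g B n x : ℝ) ∂m :=
        mul_sub_le_setIntegral hB.measurableSet hB'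
          (integrableOn_visitCount hg hB.measurableSet hB' n) (fun _ _ => Nat.cast_nonneg _)
          (mul_nonneg (hc.trans hβ) (hapos n).le) (hB.measureReal_le n hn)

lemma setIntegral_le (hB : IsGoodSet m g a A B δ K) (hg : Measurable g) (hA : m A ≠ ∞)
    (hapos : ∀ n, 0 < a n) (hδ : 0 ≤ δ) {n : ℕ} (hn : K ≤ n) :
    ∫ x in B, (visitCount g B n x : ℝ) ∂m ≤ (1 + δ) * m.real A ^ 2 * a n := by
  have hR : 0 ≤ (1 + δ) * m.real A * a n := by
    have := hapos n; have : 0 ≤ m.real A := measureReal_nonneg; positivity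
  calc ∫ x in B, (visitCount g B n x : ℝ) ∂m ≤ m.real B * ((1 + δ) * m.real A * a n) :=
        setIntegral_visitCount_le hg hB.measurableSet hB.measurableSet (hB.measure_ne_top hA)
          fun x hx => (Nat.cast_le.2 (visitCount_mono_set g hB.subset n x)).trans
            (hB.visitCount_le_of_mem x hx n hn)
    _ ≤ m.real A * ((1 + δ) * m.real A * a n) :=
        mul_le_mul_of_nonneg_right (measureReal_mono hB.subset hA) hR
    _ = (1 + δ) * m.real A ^ 2 * a n := by ring

lemma sq_mul_le_mul (hB : IsGoodSet m g a A B δ K) (hg : Measurable g) (hA : m A ≠ ∞)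
    (hc : 0 < m.real A) (hapos : ∀ n, 0 < a n) (hδ₀ : 0 ≤ δ) (hδ : δ ≤ 1 / 2) {s n : ℕ}
    (hs : K ≤ s) (hsn : s ≤ n) : (1 - 2 * δ) ^ 2 * a s ≤ (1 + δ) * a n := by
  have hB' := hB.measure_ne_top hA
  -- `n ↦ ∫_B S_n(1_B)` is nondecreasing and squeezed between multiples of `m(A)² a_n`.
  have hmono : ∫ x in B, (visitCount g B s x : ℝ) ∂m ≤ ∫ x in B, (visitCount g B n x : ℝ) ∂m :=
    setIntegral_mono_on (integrableOn_visitCount hg hB.measurableSet hB' s)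
      (integrableOn_visitCount hg hB.measurableSet hB' n) hB.measurableSet
      fun x _ => Nat.cast_le.2 (visitCount_mono g B x hsn)
  have := (hB.sq_mul_le_setIntegral hg hA hapos hδ hs).trans
    (hmono.trans (hB.setIntegral_le hg hA hapos hδ₀ (hs.trans hsn)))
  refine le_of_mul_le_mul_left ?_ (pow_pos hc 2)
  linarith

lemma sq_mul_visitCount_le_of_mem (hB : IsGoodSet m g a A B δ K) (hg : Measurable g)
    (hA : m A ≠ ∞) (hc : 0 < m.real A) (hapos : ∀ n, 0 < a n) (hδ₀ : 0 ≤ δ) (hδ : δ ≤ 1 / 2)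
    {z : X} (hz : z ∈ B) {t n : ℕ} (htn : t ≤ n) :
    (1 - 2 * δ) ^ 2 * visitCount g B t z ≤ (1 + δ) ^ 2 * m.real A * a n + K := by
  have hq : 0 ≤ (1 - 2 * δ) ^ 2 := sq_nonneg _
  have hq1 : (1 - 2 * δ) ^ 2 ≤ 1 := by nlinarith
  have hU : 0 ≤ (1 + δ) ^ 2 * m.real A * a n := by have := hapos n; positivity
  rcases le_or_gt K t with hKt | htK
  · have hmono := hB.sq_mul_le_mul hg hA hc hapos hδ₀ hδ hKt htn
    have hvis : (visitCount g B t z : ℝ) ≤ (1 + δ) * m.real A * a t :=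
      (Nat.cast_le.2 (visitCount_mono_set g hB.subset t z)).trans
        (hB.visitCount_le_of_mem z hz t hKt)
    calc (1 - 2 * δ) ^ 2 * visitCount g B t z ≤ (1 - 2 * δ) ^ 2 * ((1 + δ) * m.real A * a t) :=
          mul_le_mul_of_nonneg_left hvis hq
      _ = (1 + δ) * m.real A * ((1 - 2 * δ) ^ 2 * a t) := by ring
      _ ≤ (1 + δ) * m.real A * ((1 + δ) * a n) :=
          mul_le_mul_of_nonneg_left hmono (by positivity)
      _ ≤ (1 + δ) ^ 2 * m.real A * a n + K := by nlinarith [Nat.cast_nonneg (α := ℝ) K]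
  · have hvis : (visitCount g B t z : ℝ) ≤ K := by
      exact_mod_cast (visitCount_le g B t z).trans htK.le
    nlinarith [Nat.cast_nonneg (α := ℝ) (visitCount g B t z)]

lemma sq_mul_visitCount_le (hB : IsGoodSet m g a A B δ K) (hg : Measurable g) (hA : m A ≠ ∞)
    (hc : 0 < m.real A) (hapos : ∀ n, 0 < a n) (hδ₀ : 0 ≤ δ) (hδ : δ ≤ 1 / 2) (y : X)
    {t n : ℕ} (htn : t ≤ n) :
    (1 - 2 * δ) ^ 2 * visitCount g B t y ≤ (1 + δ) ^ 2 * m.real A * a n + K := by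
  rcases visitCount_eq_zero_or_exists_first g B t y with h0 | ⟨k, -, hkB, heq⟩
  · rw [h0, Nat.cast_zero, mul_zero]
    have := hapos n; have := hc.le; positivity
  · rw [heq]
    exact hB.sq_mul_visitCount_le_of_mem hg hA hc hapos hδ₀ hδ hkB (by omega)

lemma sq_mul_visitCount_inv_le {T : X ≃ᵐ X} (hB : IsGoodSet m T.symm a A B δ K) (hA : m A ≠ ∞)
    (hc : 0 < m.real A) (hapos : ∀ n, 0 < a n) (hδ₀ : 0 ≤ δ) (hδ : δ ≤ 1 / 2)
    (y : X) {t n : ℕ} (htn : t ≤ n) :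
    (1 - 2 * δ) ^ 2 * visitCount T B t y ≤ (1 + δ) ^ 2 * m.real A * a n + K := by
  rcases visitCount_eq_zero_or_exists_last B (fun z => T.symm_apply_apply z) t y
    with h0 | ⟨k, hk, hkB, heq⟩
  · rw [h0, Nat.cast_zero, mul_zero]
    have := hapos n; have := hc.le; positivity
  · rw [heq]
    exact hB.sq_mul_visitCount_le_of_mem T.symm.measurable hA hc hapos hδ₀ hδ hkB (by omega)

lemma pow_four_mul_le (hB : IsGoodSet m g a A B δ K) (hg : Measurable g) (hA : m A ≠ ∞)
    (hc : 0 < m.real A) (hapos : ∀ n, 0 < a n) (hδ₀ : 0 ≤ δ) (hδ : δ < 1 / 2) {n p : ℕ}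
    (hn : K ≤ n) (hp : 1 ≤ p) (hKn : (K : ℝ) ≤ δ * m.real A * a n) :
    (1 - 2 * δ) ^ 4 * a (p * n) ≤ ((1 + δ) ^ 2 + δ) * (p * a n) := by
  set c := m.real A
  set q := (1 - 2 * δ) ^ 2
  have hq : 0 < q := pow_pos (by linarith) 2
  set U := (1 + δ) ^ 2 * c * a n + K
  have hU : 0 ≤ U := by have := hapos n; positivity
  have hpt : ∀ x ∈ B, (visitCount g B (p * n) x : ℝ) ≤ p * U / q := fun x _ => by
    rw [le_div_iff₀ hq, visitCount_mul, Nat.cast_sum, Finset.sum_mul]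
    calc ∑ j ∈ Finset.range p, (visitCount g B n (g^[j * n] x) : ℝ) * q
        ≤ ∑ _j ∈ Finset.range p, U := Finset.sum_le_sum fun j _ => by
          rw [mul_comm]; exact hB.sq_mul_visitCount_le hg hA hc hapos hδ₀ hδ.le _ le_rfl
      _ = p * U := by simp
  have hint := (hB.sq_mul_le_setIntegral hg hA hapos hδ.le
    (hn.trans (Nat.le_mul_of_pos_left n hp))).trans
    (setIntegral_visitCount_le hg hB.measurableSet hB.measurableSet (hB.measure_ne_top hA) hpt)
  refine le_of_mul_le_mul_left ?_ (pow_pos hc 2)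
  calc c ^ 2 * ((1 - 2 * δ) ^ 4 * a (p * n)) = q * (((1 - 2 * δ) * c) ^ 2 * a (p * n)) := by ring
    _ ≤ q * (m.real B * (p * U / q)) := mul_le_mul_of_nonneg_left hint hq.le
    _ = m.real B * (p * U) := by field_simp
    _ ≤ c * (p * U) := mul_le_mul_of_nonneg_right (measureReal_mono hB.subset hA) (by positivity)
    _ ≤ c * (p * (((1 + δ) ^ 2 + δ) * c * a n)) := by gcongr; linarith
    _ = c ^ 2 * (((1 + δ) ^ 2 + δ) * (p * a n)) := by ring

lemma two_mul_pow_four_mul_le {T : X ≃ᵐ X} (hB : IsGoodSet m T.symm a A B δ K)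
    (hT : MeasurePreserving T m m) (hA : m A ≠ ∞) (hc : 0 < m.real A) (hapos : ∀ n, 0 < a n)
    (hδ₀ : 0 ≤ δ) (hδ : δ < 1 / 2) {n : ℕ} (hn : K ≤ n) (hn₀ : 0 < n)
    (hKn : (K : ℝ) + 1 ≤ δ * m.real A * a n) :
    2 * (1 - 2 * δ) ^ 4 * a n ≤ (1 + δ) ^ 2 * a (2 * n) + δ * a n := by
  set c := m.real A
  set q := (1 - 2 * δ) ^ 2
  have hq : 0 < q := pow_pos (by linarith) 2
  have hq1 : q ≤ 1 := by nlinarith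
  set U := (1 + δ) ^ 2 * c * a (2 * n) + K
  have hU : 0 ≤ U := by have := hapos (2 * n); positivity
  have hB' := hB.measure_ne_top hA
  have hpt : ∀ x ∈ B, (visitCount T.symm B n x : ℝ) + visitCount T B n x ≤ (U + 1) / q :=
      fun x _ => by
    obtain ⟨k, rfl⟩ : ∃ k, n = k + 1 := ⟨n - 1, by omega⟩
    have hwin := visitCount_add_visitCount B (fun z => T.symm_apply_apply z)
      (fun z => T.apply_symm_apply z) k x
    have hind : B.indicator 1 x ≤ 1 := Set.indicator_le_self' (fun _ _ => zero_le_one) x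
    have hsum : (visitCount T.symm B (k + 1) x : ℝ) + visitCount T B (k + 1) x
        ≤ visitCount T B (2 * k + 1) ((⇑T.symm)^[k] x) + 1 := by
      exact_mod_cast hwin.trans_le (Nat.add_le_add_left hind _)
    have hfwd := hB.sq_mul_visitCount_inv_le hA hc hapos hδ₀ hδ.le ((⇑T.symm)^[k] x)
      (t := 2 * k + 1) (n := 2 * (k + 1)) (by omega)
    rw [le_div_iff₀ hq]
    nlinarith
  have hsymm := setIntegral_visitCount_symm hT hB.measurableSet hB' n
  have hint : 2 * ∫ x in B, (visitCount T.symm B n x : ℝ) ∂m ≤ m.real B * ((U + 1) / q) := by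
    calc 2 * ∫ x in B, (visitCount T.symm B n x : ℝ) ∂m
        = ∫ x in B, ((visitCount T.symm B n x : ℝ) + visitCount T B n x) ∂m := by
          rw [integral_add (integrableOn_visitCount T.symm.measurable hB.measurableSet hB' n)
            (integrableOn_visitCount T.measurable hB.measurableSet hB' n), ← hsymm]
          ring
      _ ≤ ∫ _ in B, (U + 1) / q ∂m := by
          have : IsFiniteMeasure (m.restrict B) := isFiniteMeasure_restrict.mpr hB'
          exact setIntegral_mono_on
            ((integrableOn_visitCount T.symm.measurable hB.measurableSet hB' n).add
              (integrableOn_visitCount T.measurable hB.measurableSet hB' n))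
            (integrable_const _) hB.measurableSet hpt
      _ = m.real B * ((U + 1) / q) := by rw [setIntegral_const, smul_eq_mul]
  have hlow := hB.sq_mul_le_setIntegral T.symm.measurable hA hapos hδ.le hn
  refine le_of_mul_le_mul_left ?_ (pow_pos hc 2)
  calc c ^ 2 * (2 * (1 - 2 * δ) ^ 4 * a n) = q * (2 * (((1 - 2 * δ) * c) ^ 2 * a n)) := by ring
    _ ≤ q * (m.real B * ((U + 1) / q)) := mul_le_mul_of_nonneg_left (by linarith) hq.le
    _ = m.real B * (U + 1) := by field_simp
    _ ≤ c * (U + 1) := mul_le_mul_of_nonneg_right (measureReal_mono hB.subset hA) (by positivity)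
    _ ≤ c * ((1 + δ) ^ 2 * c * a (2 * n) + δ * c * a n) :=
        mul_le_mul_of_nonneg_left (by linarith) hc.le
    _ = c ^ 2 * ((1 + δ) ^ 2 * a (2 * n) + δ * a n) := by ring

lemma exists_estimates {T : X ≃ᵐ X} (hB : IsGoodSet m T.symm a A B δ K)
    (hT : MeasurePreserving T m m) (hA : m A ≠ ∞) (hc : 0 < m.real A) (hapos : ∀ n, 0 < a n)
    (ha : Tendsto a atTop atTop) (hδ₀ : 0 < δ) (hδ : δ < 1 / 2) :
    ∃ N, ∀ n, N ≤ n →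
      (∀ s, N ≤ s → s ≤ n → (1 - 2 * δ) ^ 2 * a s ≤ (1 + δ) * a n) ∧
      (∀ p, 1 ≤ p → (1 - 2 * δ) ^ 4 * a (p * n) ≤ ((1 + δ) ^ 2 + δ) * (p * a n)) ∧
      2 * (1 - 2 * δ) ^ 4 * a n ≤ (1 + δ) ^ 2 * a (2 * n) + δ * a n := by
  obtain ⟨N₀, hN₀⟩ := eventually_atTop.mp (ha.eventually_ge_atTop ((K + 1) / (δ * m.real A)))
  have hKn (n : ℕ) (hn : N₀ ≤ n) : (K : ℝ) + 1 ≤ δ * m.real A * a n :=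
    (div_le_iff₀' (by positivity)).mp (hN₀ n hn)
  refine ⟨max (max K N₀) 1, fun n hn => ?_⟩
  simp only [max_le_iff] at hn
  refine ⟨fun s hs hsn => ?_, fun p hp => ?_, ?_⟩
  · exact hB.sq_mul_le_mul T.symm.measurable hA hc hapos hδ₀.le hδ.le
      (le_of_max_le_left (le_of_max_le_left hs)) hsn
  · exact hB.pow_four_mul_le T.symm.measurable hA hc hapos hδ₀.le hδ hn.1.1 hp
      (by linarith [hKn n hn.1.2])
  · exact hB.two_mul_pow_four_mul_le hT hA hc hapos hδ₀.le hδ hn.1.1 hn.2 (hKn n hn.1.2)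

end IsGoodSet

lemma regular_variation_estimates {T : X ≃ᵐ X} (hT : MeasurePreserving T m m)
    (hAm : MeasurableSet A) (hA : m A ≠ ∞) (hc : 0 < m.real A) (hapos : ∀ n, 0 < a n)
    (ha : Tendsto a atTop atTop)
    (hsup : ∀ L, m.real A < L → ∀ᵐ x ∂m, ∀ᶠ n in atTop, (visitCount T.symm A n x : ℝ) ≤ L * a n)
    (hdev : ∀ B, MeasurableSet B → m B ≠ ∞ → ∀ η, 0 < η → Tendsto (fun n => m (B ∩
      {x | η * a n ≤ |(visitCount T.symm B n x : ℝ) - m.real B * a n|})) atTop (𝓝 0)) :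
    (∃ N, ∀ s n, N ≤ s → s ≤ n → a s ≤ 2 * a n) ∧
    (∃ N, ∀ n, N ≤ n → ∀ p, 1 ≤ p → a (p * n) ≤ 2 * (p * a n)) ∧
    (∀ θ, 0 < θ → ∃ N, ∀ n, N ≤ n → (2 - θ) * a n ≤ a (2 * n)) := by
  have hest (δ : ℝ) (hδ₀ : 0 < δ) (hδ : δ < 1 / 2) :=
    let ⟨_, _, hB⟩ := exists_isGoodSet T.symm.measurable hAm hA hc hsup hdev hδ₀
    hB.exists_estimates hT hA hc hapos ha hδ₀ hδ
  obtain ⟨N, hN⟩ := hest (1 / 20) (by norm_num) (by norm_num)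
  refine ⟨⟨N, fun s n hs hsn => ?_⟩, ⟨N, fun n hn p hp => ?_⟩, fun θ hθ => ?_⟩
  · have := (hN n (hs.trans hsn)).1 s hs hsn
    nlinarith [hapos n]
  · have := (hN n hn).2.1 p hp
    nlinarith [hapos n, (Nat.one_le_cast (α := ℝ)).2 hp]
  · set δ := min θ 1 / 100
    have hδθ : 100 * δ ≤ θ := by have := min_le_left θ 1; simp only [δ]; linarith
    have hδ₀ : 0 < δ := by positivity
    have hδ1 : δ ≤ 1 / 100 := by have := min_le_right θ 1; simp only [δ]; linarith
    obtain ⟨N, hN⟩ := hest δ hδ₀ (by linarith)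
    refine ⟨N, fun n hn => ?_⟩
    have hdoub := (hN n hn).2.2
    have hbern : 1 - 8 * δ ≤ (1 - 2 * δ) ^ 4 := by
      have := one_add_mul_le_pow (a := -(2 * δ)) (by linarith) 4
      push_cast at this; linarith
    have hcoef : (2 - θ) * (1 + δ) ^ 2 ≤ 2 * (1 - 2 * δ) ^ 4 - δ := by nlinarith
    have := hapos n
    have : 0 < (1 + δ) ^ 2 := by positivity
    refine le_of_mul_le_mul_left ?_ this
    nlinarith

end ReturnSequence

section Sequences

variable {a : ℕ → ℝ}

lemma pow_mul_le_of_doubling {q : ℝ} (hq : 0 ≤ q) {N : ℕ}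
    (h : ∀ n, N ≤ n → q * a n ≤ a (2 * n)) {n : ℕ} (hn : N ≤ n) (k : ℕ) :
    q ^ k * a n ≤ a (2 ^ k * n) := by
  induction k with
  | zero => simp
  | succ k ih =>
    calc q ^ (k + 1) * a n = q * (q ^ k * a n) := by ring
      _ ≤ q * a (2 ^ k * n) := mul_le_mul_of_nonneg_left ih hq
      _ ≤ a (2 * (2 ^ k * n)) :=
          h _ (hn.trans (Nat.le_mul_of_pos_left n (Nat.two_pow_pos k)))
      _ = a (2 ^ (k + 1) * n) := by rw [pow_succ, mul_comm _ 2, mul_assoc]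

lemma extended_regular_variation_of_doubling (hapos : ∀ n, 0 < a n)
    (hmono : ∃ N, ∀ s n, N ≤ s → s ≤ n → a s ≤ 2 * a n)
    (hup : ∃ N, ∀ n, N ≤ n → ∀ p, 1 ≤ p → a (p * n) ≤ 2 * (p * a n))
    (hdoub : ∀ θ, 0 < θ → ∃ N, ∀ n, N ≤ n → (2 - θ) * a n ≤ a (2 * n)) :
    ∃ M : ℝ, 1 < M ∧ ∃ N : ℕ → ℕ, ∀ p : ℕ, 1 ≤ p → ∀ n : ℕ, N p ≤ n →
      (1 / M) * (p * a n) ≤ a (p * n) ∧ a (p * n) ≤ M * (p * a n) := by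
  obtain ⟨N₁, h₁⟩ := hmono
  obtain ⟨N₂, h₂⟩ := hup
  choose N₃ h₃ using fun k : ℕ => hdoub (1 / (k + 1)) (by positivity)
  refine ⟨8, by norm_num, fun p => max (max N₁ N₂) (N₃ (Nat.log 2 p)), fun p hp n hn => ?_⟩
  simp only [max_le_iff] at hn
  have hpan : 0 ≤ (p : ℝ) * a n := mul_nonneg (Nat.cast_nonneg p) (hapos n).le
  refine ⟨?_, by linarith [h₂ n hn.1.2 p hp]⟩
  set k := Nat.log 2 p
  have hkp : 2 ^ k ≤ p := Nat.pow_log_le_self 2 (by omega)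
  have hpk : (p : ℝ) ≤ 2 * 2 ^ k := by
    exact_mod_cast (Nat.lt_pow_succ_log_self one_lt_two p).le.trans_eq (pow_succ' 2 k)
  have hθ : (1 : ℝ) / (k + 1) ≤ 1 := by rw [div_le_one (by positivity)]; linarith
  have hbern : (2 : ℝ) ^ k / 2 ≤ (2 - 1 / (k + 1)) ^ k := by
    have hk : (k : ℝ) * (1 / (k + 1)) ≤ 1 := by
      rw [mul_one_div, div_le_one (by positivity)]; linarith
    have := one_add_mul_le_pow (a := -(1 / (k + 1) / 2 : ℝ)) (by linarith) k
    rw [show (2 : ℝ) - 1 / (k + 1) = 2 * (1 + -(1 / (k + 1) / 2)) by ring, mul_pow]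
    have h2k : (0 : ℝ) < 2 ^ k := by positivity
    nlinarith
  have hchain := pow_mul_le_of_doubling (by linarith) (h₃ k) hn.2 k
  have hmn := h₁ (2 ^ k * n) (p * n) (hn.1.1.trans (Nat.le_mul_of_pos_left n (Nat.two_pow_pos k)))
    (Nat.mul_le_mul_right n hkp)
  have := hapos n
  nlinarith

end Sequences

end

theorem return_sequence_extended_regular_variation_general
    {X : Type*} [MeasurableSpace X] (m : Measure X) [SigmaFinite m]
    (T : X ≃ᵐ X) (hE : Ergodic (⇑T) m) (hC : Conservative (⇑T) m)
    (hinf : m Set.univ = ∞)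
    (a : ℕ → ℝ) (hapos : ∀ n, 0 < a n)
    -- weak pointwise dual ergodicity (for invertible `T`, `T̂f = f ∘ T⁻¹`):
    -- convergence in measure on every set of finite measure
    (hdual_meas : ∀ f : X → ℝ≥0∞, Measurable f → (∫⁻ x, f x ∂m) ≠ ∞ →
      ∀ E : Set X, MeasurableSet E → m E < ∞ → ∀ ε : ℝ≥0∞, 0 < ε →
        Tendsto (fun n => m (E ∩ {x | ε ≤
            (fwdSumF (⇑T.symm) f n x / ENNReal.ofReal (a n) - ∫⁻ y, f y ∂m) +
            ((∫⁻ y, f y ∂m) - fwdSumF (⇑T.symm) f n x / ENNReal.ofReal (a n))}))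
          atTop (𝓝 0))
    -- and a.e. limsup equal to the integral
    (hdual_sup : ∀ f : X → ℝ≥0∞, Measurable f → (∫⁻ x, f x ∂m) ≠ ∞ →
      ∀ᵐ x ∂m,
        limsup (fun n => fwdSumF (⇑T.symm) f n x / ENNReal.ofReal (a n)) atTop
          = ∫⁻ y, f y ∂m) :
    ∃ M : ℝ, 1 < M ∧ ∃ N : ℕ → ℕ, ∀ p : ℕ, 1 ≤ p → ∀ n : ℕ, N p ≤ n →
      (1 / M) * (p * a n) ≤ a (p * n) ∧ a (p * n) ≤ M * (p * a n) := by
  obtain ⟨k, hk⟩ := exists_measure_pos_of_not_measure_iUnion_null (μ := m) (s := spanningSets m)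
    (by rw [iUnion_spanningSets, hinf]; exact ENNReal.top_ne_zero)
  set A := spanningSets m k
  have hAm : MeasurableSet A := measurableSet_spanningSets m k
  have hA : m A ≠ ∞ := (measure_spanningSets_lt_top m k).ne
  have hc : 0 < m.real A := ENNReal.toReal_pos hk.ne' hA
  have hT : MeasurePreserving T m m := hE.toMeasurePreserving
  have hdev (B : Set X) (hBm : MeasurableSet B) (hB : m B ≠ ∞) (η : ℝ) (hη : 0 < η) :=
    tendsto_measure_le_abs_visitCount_sub hapos hBm hB (hdual_meas _ (measurable_one.indicator hBm)
      (by rwa [lintegral_indicator_one hBm]) B hBm hB.lt_top _ (ENNReal.ofReal_pos.2 hη))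
  have hsup (L : ℝ) (hL : m.real A < L) :
      ∀ᵐ x ∂m, ∀ᶠ n in atTop, (visitCount T.symm A n x : ℝ) ≤ L * a n :=
    (hdual_sup _ (measurable_one.indicator hAm) (by rwa [lintegral_indicator_one hAm])).mono
      fun x hx => eventually_visitCount_le_of_limsup_lt hapos <| by
        rwa [hx, lintegral_indicator_one hAm, ← ofReal_measureReal hA,
          ENNReal.ofReal_lt_ofReal_iff (hc.trans hL)]
  have ha : Tendsto a atTop atTop := tendsto_atTop_of_tendsto_visitCount hk.ne' hA
    ((hC.symm (hT.symm T).quasiMeasurePreserving).ae_tendsto_visitCount hAm) (hdev A hAm hA _ hc)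
  obtain ⟨hmono, hup, hdoub⟩ := regular_variation_estimates hT hAm hA hc hapos ha hsup hdev
  exact extended_regular_variation_of_doubling hapos hmono hup hdoub

/-- Theorem 4: a weakly pointwise dual ergodic, boundedly rationally ergodic
transformation has a return sequence with extended regular variation of Karamata
indices `1`: for some `M > 1`, `a_{pn} = M^{±1} p a_n` for all `p ≥ 1` and `n ≥ N(p)`. -/
theorem return_sequence_extended_regular_variation
    {X : Type*} [MeasurableSpace X] (m : Measure X) [SigmaFinite m]
    (T : X ≃ᵐ X) (hE : Ergodic (⇑T) m) (hC : Conservative (⇑T) m)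
    (hinf : m Set.univ = ∞)
    (a : ℕ → ℝ) (hapos : ∀ n, 0 < a n)
    -- weak pointwise dual ergodicity (for invertible `T`, `T̂f = f ∘ T⁻¹`):
    -- convergence in measure on every set of finite measure
    (hdual_meas : ∀ f : X → ℝ≥0∞, Measurable f → (∫⁻ x, f x ∂m) ≠ ∞ →
      ∀ E : Set X, MeasurableSet E → m E < ∞ → ∀ ε : ℝ≥0∞, 0 < ε →
        Tendsto (fun n => m (E ∩ {x | ε ≤
            (fwdSumF (⇑T.symm) f n x / ENNReal.ofReal (a n) - ∫⁻ y, f y ∂m) +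
            ((∫⁻ y, f y ∂m) - fwdSumF (⇑T.symm) f n x / ENNReal.ofReal (a n))}))
          atTop (𝓝 0))
    -- and a.e. limsup equal to the integral
    (hdual_sup : ∀ f : X → ℝ≥0∞, Measurable f → (∫⁻ x, f x ∂m) ≠ ∞ →
      ∀ᵐ x ∂m,
        limsup (fun n => fwdSumF (⇑T.symm) f n x / ENNReal.ofReal (a n)) atTop
          = ∫⁻ y, f y ∂m)
    -- bounded rational ergodicity: `α(T) < ∞`
    (α : ℝ≥0∞) (hαfin : α ≠ ∞)
    (hα : ∀ f : X → ℝ≥0∞, Measurable f → (∫⁻ x, f x ∂m) ≠ ∞ →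
      ∀ᵐ x ∂m,
        limsup (fun n => fwdSumF (⇑T) f n x / ENNReal.ofReal (a n)) atTop
          = α * ∫⁻ y, f y ∂m) :
    ∃ M : ℝ, 1 < M ∧ ∃ N : ℕ → ℕ, ∀ p : ℕ, 1 ≤ p → ∀ n : ℕ, N p ≤ n →
      (1 / M) * (p * a n) ≤ a (p * n) ∧ a (p * n) ≤ M * (p * a n) :=
  return_sequence_extended_regular_variation_general m T hE hC hinf a hapos hdual_meas hdual_sup
end

section
/- Let (X,B,m) be a σ-finite measure space with m(X)=∞, T:X→X an invertible, conservative, ergodic, measure-preserving transformation, and Ω∈B with m(Ω)=1. For s>0 set u(s) := Σ_{n≥0} e^{-sn}·m(Ω ∩ T^{-n}Ω), U_s := Σ_{n≥0} e^{-sn}·1_Ω∘T^n, and U_s^- := Σ_{n≥0} e^{-sn}·1_Ω∘T^{-n}. Assume that, as s→0+, U_s^- /u(s) → 1 in measure on Ω, and the essential supremum over Ω of U_s^- /u(s) tends to 1. Then for every p∈ℕ: ∫_Ω U_s^p dm ~ p!·∏_{k=1}^{p} u(ks) as s→0+. -/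
open MeasureTheory Filter Set Topology ENNReal

/-- `u(s) = Σ_{n≥0} e^{-sn} m(Ω ∩ T^{-n}Ω)`. -/
noncomputable def uFn {X : Type*} [MeasurableSpace X] (m : MeasureTheory.Measure X)
    (S : X → X) (Ω : Set X) (s : ℝ) : ℝ≥0∞ :=
  ∑' n : ℕ, ENNReal.ofReal (Real.exp (-(s * n))) * m (Ω ∩ S^[n] ⁻¹' Ω)

/-- `U_s = Σ_{n≥0} e^{-sn} 1_Ω ∘ S^n`. -/
noncomputable def UFn {X : Type*} (S : X → X) (Ω : Set X) (s : ℝ) (x : X) : ℝ≥0∞ :=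
  ∑' n : ℕ, ENNReal.ofReal (Real.exp (-(s * n))) * Ω.indicator (1 : X → ℝ≥0∞) (S^[n] x)

open scoped NNReal

/-!
Put `c_n = e^{-sn} 1_Ω(T^n x)`, so that `U_s(x) = Σ c_n` and the tails are
`Σ_{k≥n} c_k = e^{-sn} U_s(T^n x)`. Telescoping the convexity bounds for `(a + c)^{p+1}` along the
tails gives pointwise `U_s^{p+1} ≤ (p+1) Σ_n e^{-(p+1)sn} 1_Ω(T^n x) U_s(T^n x)^p`, and a reverse
inequality up to a term with one power of `U_s` less. Integrating over `Ω` and moving `T^n` to the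
other side (`T` preserves `m`) turns the sum into `(p+1) ∫_Ω U_s^p U⁻_{(p+1)s}`. As
`U⁻_{(p+1)s} ≈ u((p+1)s)` on `Ω` (uniformly from above, in measure from below), induction on `p`
yields `∫_Ω U_s^{p+1} ≈ (p+1) u((p+1)s) ∫_Ω U_s^p`. In the lower bound, the set where `U⁻` is
small is handled by truncating `U_s` and using the upper bound for the next moment, and the
error term is negligible because `u(s) → ∞` by Poincaré recurrence.
-/

namespace ENNReal

theorem add_pow_succ_le (a c : ℝ≥0∞) (k : ℕ) :
    (a + c) ^ (k + 1) ≤ a ^ (k + 1) + (k + 1) * c * (a + c) ^ k := by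
  induction k with
  | zero => simp [mul_comm]
  | succ k ih =>
    have hca : c * a ^ (k + 1) ≤ c * (a + c) ^ (k + 1) := by gcongr; exact le_self_add
    calc (a + c) ^ (k + 1 + 1) = (a + c) * (a + c) ^ (k + 1) := by ring
      _ ≤ (a + c) * (a ^ (k + 1) + (k + 1) * c * (a + c) ^ k) := by gcongr
      _ = a ^ (k + 1 + 1) + c * a ^ (k + 1) + (k + 1) * c * (a + c) ^ (k + 1) := by ring
      _ ≤ a ^ (k + 1 + 1) + c * (a + c) ^ (k + 1) + (k + 1) * c * (a + c) ^ (k + 1) := by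
        gcongr
      _ = a ^ (k + 1 + 1) + (↑(k + 1) + 1) * c * (a + c) ^ (k + 1) := by push_cast; ring

theorem pow_succ_add_mul_le (a c : ℝ≥0∞) (k : ℕ) :
    a ^ (k + 1) + (k + 1) * c * a ^ k ≤ (a + c) ^ (k + 1) := by
  induction k with
  | zero => simp [mul_comm]
  | succ k ih =>
    have hca : c * a ^ (k + 1) ≤ c * (a + c) ^ (k + 1) := by gcongr; exact le_self_add
    calc a ^ (k + 1 + 1) + (↑(k + 1) + 1) * c * a ^ (k + 1)
        = a * (a ^ (k + 1) + (k + 1) * c * a ^ k) + c * a ^ (k + 1) := by push_cast; ring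
      _ ≤ a * (a + c) ^ (k + 1) + c * (a + c) ^ (k + 1) := by gcongr
      _ = (a + c) ^ (k + 1 + 1) := by ring

theorem tsum_le_of_add_le {f g : ℕ → ℝ≥0∞} (h : ∀ n, g n + f (n + 1) ≤ f n) :
    ∑' n, g n ≤ f 0 := by
  have partial_le : ∀ N, ∑ n ∈ Finset.range N, g n + f N ≤ f 0 := by
    intro N
    induction N with
    | zero => simp
    | succ N ih =>
      calc ∑ n ∈ Finset.range (N + 1), g n + f (N + 1)
          = ∑ n ∈ Finset.range N, g n + (g N + f (N + 1)) := by
            rw [Finset.sum_range_succ, add_assoc]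
        _ ≤ ∑ n ∈ Finset.range N, g n + f N := by gcongr; exact h N
        _ ≤ f 0 := ih
  exact ENNReal.tsum_le_of_sum_range_le fun N => le_self_add.trans (partial_le N)

theorem le_tsum_of_le_add {f g : ℕ → ℝ≥0∞} (h : ∀ n, f n ≤ g n + f (n + 1))
    (hf : Tendsto f atTop (𝓝 0)) : f 0 ≤ ∑' n, g n := by
  have le_partial : ∀ N, f 0 ≤ ∑ n ∈ Finset.range N, g n + f N := by
    intro N
    induction N with
    | zero => simp
    | succ N ih =>
      calc f 0 ≤ ∑ n ∈ Finset.range N, g n + f N := ih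
        _ ≤ ∑ n ∈ Finset.range N, g n + (g N + f (N + 1)) := by gcongr; exact h N
        _ = ∑ n ∈ Finset.range (N + 1), g n + f (N + 1) := by
            rw [Finset.sum_range_succ, add_assoc]
  have hlim := (ENNReal.tendsto_nat_tsum g).add hf
  rw [add_zero] at hlim
  exact ge_of_tendsto' hlim le_partial

theorem tsum_tail_eq_tsum_tail_succ_add (c : ℕ → ℝ≥0∞) (n : ℕ) :
    ∑' k, c (k + n) = ∑' k, c (k + (n + 1)) + c n := by
  rw [tsum_eq_zero_add' ENNReal.summable, add_comm, zero_add]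
  congr 1
  exact tsum_congr fun k => by rw [add_right_comm, add_assoc]

/-- Discrete form of `(∫_0^∞ c)^{p+1} = (p+1) ∫_0^∞ c(t) (∫_t^∞ c)^p`, from above. -/
theorem pow_tsum_le_tsum_mul_pow_tail (c : ℕ → ℝ≥0∞) (hc : ∑' k, c k ≠ ∞) (p : ℕ) :
    (∑' k, c k) ^ (p + 1) ≤ (p + 1) * ∑' n, c n * (∑' k, c (k + n)) ^ p := by
  have step : ∀ n, (∑' k, c (k + n)) ^ (p + 1) ≤
      (p + 1) * (c n * (∑' k, c (k + n)) ^ p) + (∑' k, c (k + (n + 1))) ^ (p + 1) := by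
    intro n
    rw [tsum_tail_eq_tsum_tail_succ_add c n]
    calc _ ≤ _ := add_pow_succ_le _ _ p
      _ = _ := by ring
  have htail : Tendsto (fun n => (∑' k, c (k + n)) ^ (p + 1)) atTop (𝓝 0) := by
    simpa using ENNReal.Tendsto.pow (n := p + 1) (ENNReal.tendsto_sum_nat_add c hc)
  simpa [ENNReal.tsum_mul_left] using le_tsum_of_le_add step htail

/-- The reverse bound; the last term pays for replacing the tail from `n + 1` by that from `n`. -/
theorem tsum_mul_pow_tail_le (c : ℕ → ℝ≥0∞) (q : ℕ) :
    (q + 2) * ∑' n, c n * (∑' k, c (k + n)) ^ (q + 1) ≤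
      (∑' k, c k) ^ (q + 2) + (q + 2) * ((q + 1) * ∑' n, c n ^ 2 * (∑' k, c (k + n)) ^ q) := by
  have hshift : ∀ n, c n * (∑' k, c (k + n)) ^ (q + 1) ≤
      c n * (∑' k, c (k + (n + 1))) ^ (q + 1) + (q + 1) * (c n ^ 2 * (∑' k, c (k + n)) ^ q) := by
    intro n
    calc _ ≤ c n * ((∑' k, c (k + (n + 1))) ^ (q + 1) + (q + 1) * c n * (∑' k, c (k + n)) ^ q) := by
          rw [tsum_tail_eq_tsum_tail_succ_add c n]; gcongr; exact add_pow_succ_le _ _ q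
      _ = _ := by ring
  have htel : ∑' n, (q + 2) * (c n * (∑' k, c (k + (n + 1))) ^ (q + 1)) ≤
      (∑' k, c (k + 0)) ^ (q + 2) := by
    refine tsum_le_of_add_le (f := fun n => (∑' k, c (k + n)) ^ (q + 2)) fun n => ?_
    rw [tsum_tail_eq_tsum_tail_succ_add c n]
    calc _ = _ := by push_cast; ring
      _ ≤ _ := pow_succ_add_mul_le _ (c n) (q + 1)
  calc (q + 2) * ∑' n, c n * (∑' k, c (k + n)) ^ (q + 1)
      ≤ (q + 2) * ∑' n, (c n * (∑' k, c (k + (n + 1))) ^ (q + 1)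
          + (q + 1) * (c n ^ 2 * (∑' k, c (k + n)) ^ q)) := by
        gcongr with n; exact hshift n
    _ = ∑' n, (q + 2) * (c n * (∑' k, c (k + (n + 1))) ^ (q + 1))
          + (q + 2) * ((q + 1) * ∑' n, c n ^ 2 * (∑' k, c (k + n)) ^ q) := by
        rw [ENNReal.tsum_add, ENNReal.tsum_mul_left, ENNReal.tsum_mul_left, mul_add]
    _ ≤ _ := by gcongr; simpa using htel

lemma exists_one_lt_mul_self_le {C : ℝ≥0∞} (hC : 1 < C) : ∃ D : ℝ≥0∞, 1 < D ∧ D * D ≤ C := by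
  rcases eq_or_ne C ∞ with rfl | hC_top
  · exact ⟨2, one_lt_two, le_top⟩
  lift C to ℝ≥0 using hC_top
  refine ⟨NNReal.sqrt C, ?_, ?_⟩
  · have h1C : (1 : ℝ≥0) < C := by exact_mod_cast hC
    exact_mod_cast NNReal.sqrt_one ▸ NNReal.sqrt_lt_sqrt.2 h1C
  · rw [← ENNReal.coe_mul, NNReal.mul_self_sqrt]

lemma exists_pos_add_two_mul_le_one_sub_sq {c : ℝ≥0∞} (hc : c < 1) :
    ∃ d : ℝ≥0, 0 < d ∧ c + 2 * d ≤ (1 - d) ^ 2 := by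
  lift c to ℝ≥0 using (hc.trans one_lt_top).ne
  have hc' : c < 1 := by exact_mod_cast hc
  have hd1 : (1 - c) / 5 ≤ 1 := (div_le_self zero_le (by norm_num)).trans tsub_le_self
  have hscalar : c + 2 * ((1 - c) / 5) ≤ (1 - (1 - c) / 5) ^ 2 := by
    rw [← NNReal.coe_le_coe]
    push_cast [NNReal.coe_sub hd1, NNReal.coe_sub hc'.le]
    nlinarith [(NNReal.coe_lt_coe.2 hc' : (c : ℝ) < 1)]
  refine ⟨(1 - c) / 5, div_pos (tsub_pos_of_lt hc') (by norm_num), ?_⟩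
  rw [← ENNReal.coe_one, ← ENNReal.coe_sub]
  exact_mod_cast hscalar

lemma pow_le_pow_add_mul_pow_succ {a b : ℝ≥0∞} (hab : 1 ≤ a * b) (f : ℝ≥0∞) (k : ℕ) :
    f ^ k ≤ a ^ k + b * f ^ (k + 1) := by
  rcases le_or_gt f a with hfa | haf
  · exact (pow_le_pow_left' hfa k).trans le_self_add
  · calc f ^ k ≤ a * b * f ^ k := le_mul_of_one_le_left' hab
      _ ≤ f * b * f ^ k := by gcongr
      _ = b * f ^ (k + 1) := by ring
      _ ≤ a ^ k + b * f ^ (k + 1) := le_add_self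

lemma one_sub_le_of_tsub_add_tsub_lt {ε r : ℝ≥0∞} (h : (r - 1) + (1 - r) < ε) : 1 - ε ≤ r := by
  refine tsub_le_iff_right.2 ((le_tsub_add (b := 1) (a := r)).trans ?_)
  rw [add_comm r]
  gcongr
  exact le_add_self.trans h.le

end ENNReal

lemma setLIntegral_pow_le_of_subset {X : Type*} [MeasurableSpace X] {m : Measure X} {A Ω : Set X}
    (hA : A ⊆ Ω) {a b : ℝ≥0∞} (hab : 1 ≤ a * b) (hb : b ≠ ∞) (f : X → ℝ≥0∞) (k : ℕ) :
    ∫⁻ x in A, f x ^ k ∂m ≤ a ^ k * m A + b * ∫⁻ x in Ω, f x ^ (k + 1) ∂m :=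
  calc ∫⁻ x in A, f x ^ k ∂m ≤ ∫⁻ x in A, (a ^ k + b * f x ^ (k + 1)) ∂m :=
        lintegral_mono fun x => ENNReal.pow_le_pow_add_mul_pow_succ hab (f x) k
    _ = a ^ k * m A + b * ∫⁻ x in A, f x ^ (k + 1) ∂m := by
        rw [lintegral_add_left measurable_const, setLIntegral_const, lintegral_const_mul' _ _ hb]
    _ ≤ a ^ k * m A + b * ∫⁻ x in Ω, f x ^ (k + 1) ∂m := by gcongr

lemma setLIntegral_pow_le_of_measure_le {X : Type*} [MeasurableSpace X] {m : Measure X}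
    {A Ω : Set X} (hA : A ⊆ Ω) {u : ℝ≥0∞} (hu0 : u ≠ 0)
    (hutop : u ≠ ∞) {B : ℝ≥0} (hB : B ≠ 0) {e : ℝ≥0∞} {k : ℕ} (hmA : m A ≤ e * B ^ k)
    (f : X → ℝ≥0∞) :
    ∫⁻ x in A, f x ^ k ∂m ≤ e * u ^ k + B * u⁻¹ * ∫⁻ x in Ω, f x ^ (k + 1) ∂m := by
  have hBinv : (B : ℝ≥0∞)⁻¹ * B = 1 := ENNReal.inv_mul_cancel (by simpa using hB) ENNReal.coe_ne_top
  have hab : 1 ≤ u * (B : ℝ≥0∞)⁻¹ * (B * u⁻¹) := le_of_eq <| by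
    rw [show u * (B : ℝ≥0∞)⁻¹ * (B * u⁻¹) = u * u⁻¹ * ((B : ℝ≥0∞)⁻¹ * B) by ring,
      ENNReal.mul_inv_cancel hu0 hutop, hBinv, one_mul]
  refine (setLIntegral_pow_le_of_subset hA hab
    (ENNReal.mul_ne_top ENNReal.coe_ne_top (ENNReal.inv_ne_top.2 hu0)) f k).trans ?_
  gcongr ?_ + _
  calc (u * (B : ℝ≥0∞)⁻¹) ^ k * m A ≤ (u * (B : ℝ≥0∞)⁻¹) ^ k * (e * B ^ k) := by gcongr
    _ = e * u ^ k * ((B : ℝ≥0∞)⁻¹ * B) ^ k := by ring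
    _ = e * u ^ k := by rw [hBinv, one_pow, mul_one]

lemma setLIntegral_mul_le_of_ae_le {X : Type*} [MeasurableSpace X] {m : Measure X} {Ω : Set X}
    {f g : X → ℝ≥0∞} (hf : Measurable f) {K : ℝ≥0∞}
    (hg : ∀ᵐ x ∂m.restrict Ω, g x ≤ K) : ∫⁻ x in Ω, f x * g x ∂m ≤ K * ∫⁻ x in Ω, f x ∂m := by
  rw [← lintegral_const_mul _ hf]
  exact lintegral_mono_ae (hg.mono fun x hx => by rw [mul_comm]; gcongr)

lemma eventually_ae_le_mul_of_tendsto_essSup {α X : Type*} [MeasurableSpace X] {l : Filter α}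
    {μ : Measure X} {f : α → X → ℝ≥0∞} {g : α → ℝ≥0∞} (hg : ∀ᶠ a in l, g a ≠ 0)
    (h : Tendsto (fun a => essSup (fun x => f a x / g a) μ) l (𝓝 1)) {D : ℝ≥0∞} (hD : 1 < D) :
    ∀ᶠ a in l, ∀ᵐ x ∂μ, f a x ≤ D * g a := by
  filter_upwards [h.eventually_lt_const hD, hg] with a hlt hga
  filter_upwards [ENNReal.ae_le_essSup fun x => f a x / g a] with x hx
  exact (ENNReal.div_le_iff_le_mul (Or.inl hga) (Or.inr (one_pos.trans hD).ne')).1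
    (hx.trans hlt.le)

lemma tendsto_div_nhds_one_of_eventually {α : Type*} {l : Filter α} {f g : α → ℝ≥0∞}
    (hg : ∀ᶠ x in l, g x ≠ 0 ∧ g x ≠ ∞) (hlow : ∀ c < 1, ∀ᶠ x in l, c * g x ≤ f x)
    (hup : ∀ C > 1, ∀ᶠ x in l, f x ≤ C * g x) : Tendsto (fun x => f x / g x) l (𝓝 1) := by
  refine tendsto_order.2 ⟨fun a ha => ?_, fun b hb => ?_⟩
  · obtain ⟨c, hac, hc⟩ := exists_between ha
    filter_upwards [hlow c hc, hg] with x hx hgx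
    exact hac.trans_le ((ENNReal.le_div_iff_mul_le (Or.inl hgx.1) (Or.inl hgx.2)).2 hx)
  · obtain ⟨C, hC, hCb⟩ := exists_between hb
    filter_upwards [hup C hC] with x hx
    exact ((ENNReal.div_le_iff_le_mul (Or.inr hCb.ne_top) (Or.inr (one_pos.trans hC).ne')).2
      hx).trans_lt hCb

noncomputable def expWeight (s : ℝ) (n : ℕ) : ℝ≥0∞ := ENNReal.ofReal (Real.exp (-(s * n)))

lemma expWeight_add (s : ℝ) (n k : ℕ) : expWeight s (n + k) = expWeight s n * expWeight s k := by
  rw [expWeight, expWeight, expWeight, ← ENNReal.ofReal_mul (Real.exp_pos _).le, ← Real.exp_add]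
  push_cast
  ring_nf

lemma expWeight_pow (s : ℝ) (n k : ℕ) : expWeight s n ^ k = expWeight (k * s) n := by
  rw [expWeight, expWeight, ← ENNReal.ofReal_pow (Real.exp_pos _).le, ← Real.exp_nat_mul]
  ring_nf

lemma expWeight_zero_left (n : ℕ) : expWeight 0 n = 1 := by simp [expWeight]

lemma expWeight_antitone_left (n : ℕ) : Antitone fun s => expWeight s n := fun s t hst =>
  ENNReal.ofReal_le_ofReal <| Real.exp_le_exp.2 <| by nlinarith [(Nat.cast_nonneg n : (0 : ℝ) ≤ n)]

lemma continuous_expWeight (n : ℕ) : Continuous fun s => expWeight s n :=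
  ENNReal.continuous_ofReal.comp <| Real.continuous_exp.comp <| by fun_prop

lemma tsum_expWeight_ne_top {s : ℝ} (hs : 0 < s) : ∑' n, expWeight s n ≠ ∞ := by
  have hgeom : ∀ n, expWeight s n = ENNReal.ofReal (Real.exp (-s)) ^ n := fun n => by
    rw [expWeight, ← ENNReal.ofReal_pow (Real.exp_pos _).le, ← Real.exp_nat_mul]
    ring_nf
  simp_rw [hgeom, ENNReal.tsum_geometric, Ne, ENNReal.inv_eq_top, tsub_eq_zero_iff_le, not_le]
  exact ENNReal.ofReal_lt_one.2 (Real.exp_lt_one_iff.2 (neg_lt_zero.2 hs))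

section OrbitSum

variable {X : Type*} {S : X → X} {Ω : Set X} {s : ℝ}

noncomputable def orbitSum (S : X → X) (Ω : Set X) (t : ℝ) (F : X → ℝ≥0∞) (x : X) : ℝ≥0∞ :=
  ∑' n, expWeight t n * Ω.indicator F (S^[n] x)

lemma UFn_eq_orbitSum (S : X → X) (Ω : Set X) (t : ℝ) : UFn S Ω t = orbitSum S Ω t 1 := rfl

lemma UFn_le_tsum_expWeight (S : X → X) (Ω : Set X) (t : ℝ) (x : X) :
    UFn S Ω t x ≤ ∑' n, expWeight t n :=
  ENNReal.tsum_le_tsum fun n => mul_le_of_le_one_right' (Set.indicator_le_self' (by simp) _)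

lemma tsum_expWeight_mul_indicator_iterate (s : ℝ) (x : X) (n : ℕ) :
    ∑' k, expWeight s (k + n) * Ω.indicator 1 (S^[k + n] x) =
      expWeight s n * UFn S Ω s (S^[n] x) := by
  rw [UFn_eq_orbitSum, orbitSum, ← ENNReal.tsum_mul_left]
  refine tsum_congr fun k => ?_
  rw [expWeight_add, Function.iterate_add_apply]
  ring

lemma UFn_ne_top (hs : 0 < s) (S : X → X) (Ω : Set X) (x : X) : UFn S Ω s x ≠ ∞ :=
  ne_top_of_le_ne_top (tsum_expWeight_ne_top hs) (UFn_le_tsum_expWeight S Ω s x)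

lemma expWeight_mul_indicator_pow_mul_pow (s : ℝ) (x : X) (n : ℕ) {j : ℕ} (hj : j ≠ 0) (r : ℕ) :
    (expWeight s n * Ω.indicator 1 (S^[n] x)) ^ j * (expWeight s n * UFn S Ω s (S^[n] x)) ^ r =
      expWeight ((r + j : ℕ) * s) n * Ω.indicator (UFn S Ω s ^ r) (S^[n] x) := by
  rw [← expWeight_pow, pow_add]
  by_cases hx : S^[n] x ∈ Ω
  · simp only [hx, Set.indicator_of_mem, Pi.one_apply, mul_one, Pi.pow_apply]
    ring
  · simp [hx, hj]

lemma UFn_pow_succ_le_orbitSum (hs : 0 < s) (p : ℕ) (x : X) :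
    UFn S Ω s x ^ (p + 1) ≤ (p + 1) * orbitSum S Ω ((p + 1 : ℕ) * s) (UFn S Ω s ^ p) x := by
  have h := ENNReal.pow_tsum_le_tsum_mul_pow_tail
    (fun n => expWeight s n * Ω.indicator 1 (S^[n] x)) (UFn_ne_top hs S Ω x) p
  refine h.trans_eq (congrArg _ (tsum_congr fun n => ?_))
  rw [tsum_expWeight_mul_indicator_iterate, ← pow_one (expWeight s n * _),
    expWeight_mul_indicator_pow_mul_pow s x n one_ne_zero]

lemma orbitSum_le_UFn_pow_add (s : ℝ) (q : ℕ) (x : X) :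
    (q + 2) * orbitSum S Ω ((q + 2 : ℕ) * s) (UFn S Ω s ^ (q + 1)) x ≤
      UFn S Ω s x ^ (q + 2) +
        (q + 2) * ((q + 1) * orbitSum S Ω ((q + 2 : ℕ) * s) (UFn S Ω s ^ q) x) := by
  have hterm : ∀ {j k : ℕ} (r : ℕ), j ≠ 0 → r + j = k → orbitSum S Ω (k * s) (UFn S Ω s ^ r) x =
      ∑' n, (expWeight s n * Ω.indicator 1 (S^[n] x)) ^ j *
        (∑' k, expWeight s (k + n) * Ω.indicator 1 (S^[k + n] x)) ^ r := fun r hj hk =>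
    tsum_congr fun n => by
      rw [← hk, tsum_expWeight_mul_indicator_iterate, expWeight_mul_indicator_pow_mul_pow s x n hj]
  rw [hterm (k := q + 2) (q + 1) one_ne_zero rfl, hterm q two_ne_zero rfl]
  simp only [pow_one]
  exact ENNReal.tsum_mul_pow_tail_le (fun n => expWeight s n * Ω.indicator 1 (S^[n] x)) q

variable [MeasurableSpace X] {m : Measure X}

lemma measurable_orbitSum (hS : Measurable S) (hΩ : MeasurableSet Ω) (t : ℝ) {F : X → ℝ≥0∞}
    (hF : Measurable F) : Measurable (orbitSum S Ω t F) :=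
  Measurable.tsum fun n => measurable_const.mul ((hF.indicator hΩ).comp (hS.iterate n))

lemma measurable_UFn (hS : Measurable S) (hΩ : MeasurableSet Ω) (t : ℝ) :
    Measurable (UFn S Ω t) :=
  measurable_orbitSum hS hΩ t measurable_one

lemma setLIntegral_UFn (hS : Measurable S) (hΩ : MeasurableSet Ω) (t : ℝ) :
    ∫⁻ x in Ω, UFn S Ω t x ∂m = uFn m S Ω t := by
  have hind : ∀ n, Measurable fun x => Ω.indicator (1 : X → ℝ≥0∞) (S^[n] x) := fun n =>
    (measurable_one.indicator hΩ).comp (hS.iterate n)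
  simp_rw [UFn]
  rw [lintegral_tsum fun n => ((hind n).const_mul _).aemeasurable]
  refine tsum_congr fun n => ?_
  have hpre : MeasurableSet (S^[n] ⁻¹' Ω) := hS.iterate n hΩ
  rw [lintegral_const_mul _ (hind n)]
  have hcomp : ∀ x, Ω.indicator (1 : X → ℝ≥0∞) (S^[n] x) = (S^[n] ⁻¹' Ω).indicator 1 x :=
    fun x => by by_cases hx : S^[n] x ∈ Ω <;> simp [hx]
  simp_rw [hcomp]
  rw [lintegral_indicator_one hpre, Measure.restrict_apply hpre, Set.inter_comm]

end OrbitSum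

section Duality

variable {X : Type*} [MeasurableSpace X] {m : Measure X} {T : X ≃ᵐ X} {Ω : Set X}

lemma lintegral_comp_iterate_eq (hT : MeasurePreserving T m m) (hΩ : MeasurableSet Ω)
    {G : X → ℝ≥0∞} (hG : Measurable G) (n : ℕ) :
    ∫⁻ x in Ω, G (T^[n] x) ∂m = ∫⁻ y, Ω.indicator 1 (T.symm^[n] y) * G y ∂m := by
  have hk : Measurable fun y => Ω.indicator (1 : X → ℝ≥0∞) (T.symm^[n] y) * G y :=
    ((measurable_one.indicator hΩ).comp (T.symm.measurable.iterate n)).mul hG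
  rw [← (hT.iterate n).lintegral_comp hk, ← lintegral_indicator hΩ]
  refine lintegral_congr fun x => ?_
  rw [Function.LeftInverse.iterate T.symm_apply_apply n x]
  by_cases hx : x ∈ Ω <;> simp [hx]

theorem setLIntegral_orbitSum (hT : MeasurePreserving T m m) (hΩ : MeasurableSet Ω) (t : ℝ)
    {F : X → ℝ≥0∞} (hF : Measurable F) :
    ∫⁻ x in Ω, orbitSum T Ω t F x ∂m = ∫⁻ y in Ω, F y * UFn T.symm Ω t y ∂m := by
  have hind : ∀ n, Measurable fun y => Ω.indicator (1 : X → ℝ≥0∞) (T.symm^[n] y) := fun n =>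
    (measurable_one.indicator hΩ).comp (T.symm.measurable.iterate n)
  have hG : Measurable (Ω.indicator F) := hF.indicator hΩ
  simp_rw [orbitSum]
  calc ∫⁻ x in Ω, ∑' n, expWeight t n * Ω.indicator F (T^[n] x) ∂m
      = ∑' n, expWeight t n * ∫⁻ y, Ω.indicator 1 (T.symm^[n] y) * Ω.indicator F y ∂m := by
        rw [lintegral_tsum (f := fun n x => expWeight t n * Ω.indicator F (T^[n] x))
          fun n => ((hG.comp (T.measurable.iterate n)).const_mul _).aemeasurable]
        refine tsum_congr fun n => ?_
        rw [lintegral_const_mul (f := fun x => Ω.indicator F (T^[n] x)) _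
          (hG.comp (T.measurable.iterate n)), lintegral_comp_iterate_eq hT hΩ hG]
    _ = ∫⁻ y, ∑' n, expWeight t n * (Ω.indicator 1 (T.symm^[n] y) * Ω.indicator F y) ∂m := by
        rw [lintegral_tsum (f := fun n y =>
            expWeight t n * (Ω.indicator 1 (T.symm^[n] y) * Ω.indicator F y))
          fun n => (((hind n).mul hG).const_mul _).aemeasurable]
        refine tsum_congr fun n => (lintegral_const_mul _ ((hind n).mul hG)).symm
    _ = ∫⁻ y, Ω.indicator (fun y => F y * UFn T.symm Ω t y) y ∂m := by
        refine lintegral_congr fun y => ?_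
        rw [Set.indicator_mul_left, UFn, ← ENNReal.tsum_mul_left]
        exact tsum_congr fun n => by rw [expWeight]; ring
    _ = ∫⁻ y in Ω, F y * UFn T.symm Ω t y ∂m := lintegral_indicator hΩ _

theorem setLIntegral_UFn_pow_succ_le (hT : MeasurePreserving T m m) (hΩ : MeasurableSet Ω)
    {s : ℝ} (hs : 0 < s) (p : ℕ) :
    ∫⁻ x in Ω, UFn T Ω s x ^ (p + 1) ∂m ≤
      (p + 1) * ∫⁻ y in Ω, UFn T Ω s y ^ p * UFn T.symm Ω ((p + 1 : ℕ) * s) y ∂m := by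
  have hF : Measurable (UFn T Ω s ^ p) := (measurable_UFn T.measurable hΩ s).pow_const p
  calc _ ≤ ∫⁻ x in Ω, (p + 1) * orbitSum T Ω ((p + 1 : ℕ) * s) (UFn T Ω s ^ p) x ∂m :=
        lintegral_mono fun x => UFn_pow_succ_le_orbitSum hs p x
    _ = _ := by
      rw [lintegral_const_mul _ (measurable_orbitSum T.measurable hΩ _ hF),
        setLIntegral_orbitSum hT hΩ _ hF]
      rfl

theorem setLIntegral_UFn_pow_mul_UFn_symm_le (hT : MeasurePreserving T m m)
    (hΩ : MeasurableSet Ω) (s : ℝ) (q : ℕ) :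
    (q + 2) * ∫⁻ y in Ω, UFn T Ω s y ^ (q + 1) * UFn T.symm Ω ((q + 2 : ℕ) * s) y ∂m ≤
      ∫⁻ x in Ω, UFn T Ω s x ^ (q + 2) ∂m +
        (q + 2) * ((q + 1) * ∫⁻ y in Ω, UFn T Ω s y ^ q * UFn T.symm Ω ((q + 2 : ℕ) * s) y ∂m) := by
  have hF (r : ℕ) : Measurable (UFn T Ω s ^ r) := (measurable_UFn T.measurable hΩ s).pow_const r
  have hO (r : ℕ) : Measurable (orbitSum T Ω ((q + 2 : ℕ) * s) (UFn T Ω s ^ r)) :=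
    measurable_orbitSum T.measurable hΩ _ (hF r)
  calc _ = ∫⁻ x in Ω, (q + 2) * orbitSum T Ω ((q + 2 : ℕ) * s) (UFn T Ω s ^ (q + 1)) x ∂m := by
        rw [lintegral_const_mul _ (hO _), setLIntegral_orbitSum hT hΩ _ (hF _)]
        rfl
    _ ≤ ∫⁻ x in Ω, (UFn T Ω s x ^ (q + 2) +
          (q + 2) * ((q + 1) * orbitSum T Ω ((q + 2 : ℕ) * s) (UFn T Ω s ^ q) x)) ∂m :=
        lintegral_mono fun x => orbitSum_le_UFn_pow_add s q x
    _ = _ := by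
        rw [lintegral_add_left (f := fun x => UFn T Ω s x ^ (q + 2)) (hF _),
          lintegral_const_mul _ ((hO _).const_mul _),
          lintegral_const_mul _ (hO _), setLIntegral_orbitSum hT hΩ _ (hF _)]
        rfl

end Duality

section ReturnTimes

variable {X : Type*} [MeasurableSpace X] {m : Measure X} {S : X → X} {Ω : Set X}

lemma measure_le_uFn (s : ℝ) : m Ω ≤ uFn m S Ω s :=
  le_trans (by simp) (ENNReal.le_tsum 0)

lemma uFn_ne_zero (hΩ : m Ω ≠ 0) (s : ℝ) : uFn m S Ω s ≠ 0 :=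
  (pos_iff_ne_zero.1 ((pos_iff_ne_zero.2 hΩ).trans_le (measure_le_uFn s)))

lemma uFn_ne_top (hΩ : m Ω ≠ ∞) {s : ℝ} (hs : 0 < s) : uFn m S Ω s ≠ ∞ := by
  refine ne_top_of_le_ne_top (ENNReal.mul_ne_top (tsum_expWeight_ne_top hs) hΩ) ?_
  rw [← ENNReal.tsum_mul_right]
  exact ENNReal.tsum_le_tsum fun n => mul_le_mul_right (measure_mono Set.inter_subset_left) _

lemma uFn_antitone : Antitone (uFn m S Ω) := fun _ _ hst =>
  ENNReal.tsum_le_tsum fun n => mul_le_mul_left (expWeight_antitone_left n hst) _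

lemma tendsto_tsum_expWeight_mul_nhds_zero {b : ℕ → ℝ≥0∞} (hb : ∑' n, b n = ∞) :
    Tendsto (fun s => ∑' n, expWeight s n * b n) (𝓝 0) (𝓝 ∞) := by
  refine tendsto_order.2 ⟨fun M hM => ?_, fun M hM => absurd hM not_top_lt⟩
  have hpartial := ENNReal.tendsto_nat_tsum b
  rw [hb] at hpartial
  obtain ⟨N, hN⟩ := ((tendsto_order.1 hpartial).1 M hM).exists
  have hfinite : Tendsto (fun s => ∑ n ∈ Finset.range N, expWeight s n * b n) (𝓝 0)
      (𝓝 (∑ n ∈ Finset.range N, b n)) := by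
    refine tendsto_finsetSum _ fun n _ => ?_
    simpa [expWeight_zero_left] using
      ENNReal.Tendsto.mul_const ((continuous_expWeight n).tendsto 0)
        (Or.inl (by simp [expWeight_zero_left]))
  filter_upwards [(tendsto_order.1 hfinite).1 M hN] with s hs
  exact hs.trans_le (ENNReal.sum_le_tsum _)

/-- Poincaré recurrence makes `U_0 = ∞` a.e. on `Ω`, so `Σ m(Ω ∩ S^{-n}Ω) = ∫_Ω U_0 = ∞`. -/
theorem MeasureTheory.Conservative.tsum_measure_inter_preimage_iterate_eq_top
    (hC : Conservative S m)
    (hΩ : MeasurableSet Ω) (hΩ0 : m Ω ≠ 0) : ∑' n, m (Ω ∩ S^[n] ⁻¹' Ω) = ∞ := by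
  have hrec : ∀ᵐ x ∂m.restrict Ω, UFn S Ω 0 x = ∞ := by
    rw [ae_restrict_iff' hΩ]
    filter_upwards [hC.ae_mem_imp_frequently_image_mem hΩ.nullMeasurableSet] with x hx hxΩ
    have hinf : Infinite {n : ℕ | S^[n] x ∈ Ω} :=
      (Nat.frequently_atTop_iff_infinite.1 (hx hxΩ)).to_subtype
    have hterm : ∀ n, expWeight 0 n * Ω.indicator 1 (S^[n] x) =
        {n : ℕ | S^[n] x ∈ Ω}.indicator 1 n := fun n => by
      by_cases h : S^[n] x ∈ Ω <;> simp [expWeight_zero_left, h]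
    rw [UFn_eq_orbitSum, orbitSum, tsum_congr hterm, ← tsum_subtype]
    exact ENNReal.tsum_const_eq_top_of_ne_zero one_ne_zero
  calc ∑' n, m (Ω ∩ S^[n] ⁻¹' Ω) = uFn m S Ω 0 := by simp [uFn]
    _ = ∫⁻ x in Ω, UFn S Ω 0 x ∂m := (setLIntegral_UFn hC.measurable hΩ 0).symm
    _ = ∞ := by rw [lintegral_congr_ae hrec, setLIntegral_const, ENNReal.top_mul hΩ0]

theorem tendsto_uFn_nhdsGT_zero (hC : Conservative S m) (hΩ : MeasurableSet Ω) (hΩ0 : m Ω ≠ 0) :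
    Tendsto (uFn m S Ω) (𝓝[>] 0) (𝓝 ∞) :=
  (tendsto_tsum_expWeight_mul_nhds_zero
    (hC.tsum_measure_inter_preimage_iterate_eq_top hΩ hΩ0)).mono_left nhdsWithin_le_nhds

end ReturnTimes

section Moments

variable {X : Type*} [MeasurableSpace X]

noncomputable def momentU (m : Measure X) (S : X → X) (Ω : Set X) (p : ℕ) (s : ℝ) : ℝ≥0∞ :=
  ∫⁻ x in Ω, UFn S Ω s x ^ p ∂m

noncomputable def factorialProdU (m : Measure X) (S : X → X) (Ω : Set X) (p : ℕ) (s : ℝ) :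
    ℝ≥0∞ :=
  p.factorial * ∏ k ∈ Finset.Icc 1 p, uFn m S Ω (k * s)

/-- In `ℝ≥0∞`, `(r - 1) + (1 - r) = |r - 1|`: the points of `Ω` where `|U_s⁻ / u(s) - 1| ≥ ε`. -/
def badSet (m : Measure X) (T : X ≃ᵐ X) (Ω : Set X) (ε : ℝ≥0∞) (s : ℝ) : Set X :=
  Ω ∩ {x | ε ≤ (UFn T.symm Ω s x / uFn m T Ω s - 1) + (1 - UFn T.symm Ω s x / uFn m T Ω s)}

variable {m : Measure X} {S : X → X} {T : X ≃ᵐ X} {Ω : Set X}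

lemma factorialProdU_zero (s : ℝ) : factorialProdU m S Ω 0 s = 1 := by simp [factorialProdU]

lemma factorialProdU_succ (p : ℕ) (s : ℝ) :
    factorialProdU m S Ω (p + 1) s =
      (p + 1) * uFn m S Ω ((p + 1 : ℕ) * s) * factorialProdU m S Ω p s := by
  rw [factorialProdU, factorialProdU, Finset.prod_Icc_succ_top (Nat.le_add_left 1 p),
    Nat.factorial_succ]
  push_cast
  ring

lemma factorialProdU_ne_zero (hΩ : m Ω ≠ 0) (p : ℕ) (s : ℝ) : factorialProdU m S Ω p s ≠ 0 := by
  simp [factorialProdU, Finset.prod_eq_zero_iff, uFn_ne_zero hΩ, Nat.factorial_ne_zero]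

lemma factorialProdU_ne_top (hΩ : m Ω ≠ ∞) (p : ℕ) {s : ℝ} (hs : 0 < s) :
    factorialProdU m S Ω p s ≠ ∞ :=
  ENNReal.mul_ne_top (ENNReal.natCast_ne_top _) <| ENNReal.prod_ne_top fun k hk =>
    uFn_ne_top hΩ (mul_pos (by exact_mod_cast (Finset.mem_Icc.1 hk).1) hs)

lemma uFn_pow_le_factorialProdU (p : ℕ) {s w : ℝ} (hs : 0 ≤ s) (hw : (p : ℝ) ≤ w) :
    uFn m S Ω (w * s) ^ p ≤ factorialProdU m S Ω p s := by
  refine le_trans ?_ (le_mul_of_one_le_left zero_le (by exact_mod_cast p.factorial_pos))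
  calc uFn m S Ω (w * s) ^ p = ∏ _k ∈ Finset.Icc 1 p, uFn m S Ω (w * s) := by simp
    _ ≤ ∏ k ∈ Finset.Icc 1 p, uFn m S Ω (k * s) :=
        Finset.prod_le_prod' fun k hk => uFn_antitone <| mul_le_mul_of_nonneg_right
          (le_trans (by exact_mod_cast (Finset.mem_Icc.1 hk).2) hw) hs

lemma momentU_zero (hΩ1 : m Ω = 1) (s : ℝ) : momentU m S Ω 0 s = 1 := by simp [momentU, hΩ1]

lemma momentU_one (hS : Measurable S) (hΩ : MeasurableSet Ω) (s : ℝ) :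
    momentU m S Ω 1 s = factorialProdU m S Ω 1 s := by
  simp [momentU, factorialProdU, setLIntegral_UFn hS hΩ]

lemma momentU_succ_le_of_ae_le (hT : MeasurePreserving T m m) (hΩ : MeasurableSet Ω) {s : ℝ}
    (hs : 0 < s) (p : ℕ) {K : ℝ≥0∞}
    (hK : ∀ᵐ x ∂m.restrict Ω, UFn T.symm Ω ((p + 1 : ℕ) * s) x ≤ K) :
    momentU m T Ω (p + 1) s ≤ (p + 1) * K * momentU m T Ω p s :=
  calc momentU m T Ω (p + 1) s
      ≤ (p + 1) * ∫⁻ y in Ω, UFn T Ω s y ^ p * UFn T.symm Ω ((p + 1 : ℕ) * s) y ∂m :=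
        setLIntegral_UFn_pow_succ_le hT hΩ hs p
    _ ≤ (p + 1) * (K * momentU m T Ω p s) := by
        gcongr
        exact setLIntegral_mul_le_of_ae_le ((measurable_UFn T.measurable hΩ s).pow_const p) hK
    _ = (p + 1) * K * momentU m T Ω p s := by ring

theorem eventually_momentU_le (hT : MeasurePreserving T m m) (hΩ : MeasurableSet Ω)
    (hΩ1 : m Ω = 1)
    (hV : ∀ D > 1, ∀ᶠ s in 𝓝[>] 0, ∀ᵐ x ∂m.restrict Ω, UFn T.symm Ω s x ≤ D * uFn m T Ω s)
    (p : ℕ) : ∀ C > 1, ∀ᶠ s in 𝓝[>] 0, momentU m T Ω p s ≤ C * factorialProdU m T Ω p s := by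
  induction p with
  | zero =>
    intro C hC
    refine Eventually.of_forall fun s => ?_
    rw [momentU_zero hΩ1, factorialProdU_zero, mul_one]
    exact hC.le
  | succ p ih =>
    intro C hC
    obtain ⟨D, hD, hDC⟩ := ENNReal.exists_one_lt_mul_self_le hC
    filter_upwards [ih D hD, eventually_nhdsGT_zero_mul_left (x := ((p + 1 : ℕ) : ℝ))
      (by positivity) (hV D hD),
      self_mem_nhdsWithin] with s hMp hVs hs
    calc momentU m T Ω (p + 1) s
        ≤ (p + 1) * (D * uFn m T Ω ((p + 1 : ℕ) * s)) * momentU m T Ω p s :=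
          momentU_succ_le_of_ae_le hT hΩ hs p hVs
      _ ≤ (p + 1) * (D * uFn m T Ω ((p + 1 : ℕ) * s)) * (D * factorialProdU m T Ω p s) := by
          gcongr
      _ = D * D * factorialProdU m T Ω (p + 1) s := by rw [factorialProdU_succ]; ring
      _ ≤ C * factorialProdU m T Ω (p + 1) s := by gcongr

lemma measurableSet_badSet (hΩ : MeasurableSet Ω) (ε : ℝ≥0∞) (s : ℝ) :
    MeasurableSet (badSet m T Ω ε s) := by
  have hV := (measurable_UFn T.symm.measurable hΩ s).div_const (uFn m T Ω s)
  exact hΩ.inter (measurableSet_le measurable_const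
    ((hV.sub measurable_const).add (measurable_const.sub hV)))

lemma mul_setLIntegral_diff_badSet_le (hΩ : MeasurableSet Ω) {s : ℝ} (hu0 : uFn m T Ω s ≠ 0)
    (hutop : uFn m T Ω s ≠ ∞) (d : ℝ≥0∞) {F : X → ℝ≥0∞} (hF : Measurable F) :
    (1 - d) * uFn m T Ω s * ∫⁻ x in Ω \ badSet m T Ω d s, F x ∂m ≤
      ∫⁻ x in Ω, F x * UFn T.symm Ω s x ∂m := by
  rw [← lintegral_const_mul _ hF]
  refine (setLIntegral_mono' (hΩ.diff (measurableSet_badSet hΩ d s)) fun x hx => ?_).trans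
    (lintegral_mono_set Set.sdiff_subset)
  have hgood : 1 - d ≤ UFn T.symm Ω s x / uFn m T Ω s :=
    ENNReal.one_sub_le_of_tsub_add_tsub_lt (not_le.1 fun h => hx.2 ⟨hx.1, h⟩)
  rw [mul_comm (F x)]
  gcongr
  exact (ENNReal.le_div_iff_mul_le (Or.inl hu0) (Or.inl hutop)).1 hgood

lemma factorialProdU_add_two (p : ℕ) (s : ℝ) :
    factorialProdU m T Ω (p + 2) s =
      (p + 2) * uFn m T Ω ((p + 2 : ℕ) * s) * factorialProdU m T Ω (p + 1) s := by
  have hcast : ((p + 1 : ℕ) : ℝ≥0∞) + 1 = p + 2 := by push_cast; ring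
  rw [factorialProdU_succ, hcast]

/-- The integral of `U_s^{q+1}` over the set where `U⁻` deviates is controlled by truncating
`U_s` at level `u((q+2)s)/B`, using the bound on the next moment above the level. -/
lemma setLIntegral_badSet_pow_le (hΩ1 : m Ω = 1) {s : ℝ} (hs : 0 < s) (q : ℕ) {d B : ℝ≥0}
    (hB : B ≠ 0) (hBd : 2 * (q + 2) * (B : ℝ≥0∞) ≤ d / 2)
    (hbad : m (badSet m T Ω d ((q + 2 : ℕ) * s)) ≤ d / 2 * B ^ (q + 1))
    (hM2 : momentU m T Ω (q + 2) s ≤ 2 * factorialProdU m T Ω (q + 2) s) :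
    ∫⁻ x in badSet m T Ω d ((q + 2 : ℕ) * s), UFn T Ω s x ^ (q + 1) ∂m ≤
      d * factorialProdU m T Ω (q + 1) s := by
  set u := uFn m T Ω ((q + 2 : ℕ) * s)
  set P := factorialProdU m T Ω (q + 1) s
  have hu0 : u ≠ 0 := uFn_ne_zero (by simp [hΩ1]) _
  have hutop : u ≠ ∞ := uFn_ne_top (by simp [hΩ1]) (by positivity)
  calc _ ≤ d / 2 * u ^ (q + 1) + B * u⁻¹ * momentU m T Ω (q + 2) s :=
        setLIntegral_pow_le_of_measure_le Set.inter_subset_left hu0 hutop hB hbad _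
    _ ≤ d / 2 * P + B * u⁻¹ * (2 * ((q + 2) * u * P)) := by
        rw [← factorialProdU_add_two]
        gcongr
        exact uFn_pow_le_factorialProdU (q + 1) hs.le (by push_cast; linarith)
    _ = d / 2 * P + 2 * (q + 2) * B * (u⁻¹ * u) * P := by ring
    _ ≤ d / 2 * P + d / 2 * P := by rw [ENNReal.inv_mul_cancel hu0 hutop, mul_one]; gcongr
    _ = d * P := by rw [← add_mul, ENNReal.add_halves]

lemma mul_setLIntegral_pow_mul_UFn_symm_le (hΩ : MeasurableSet Ω) {s : ℝ} (q : ℕ)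
    {d : ℝ≥0∞} (hV : ∀ᵐ x ∂m.restrict Ω,
      UFn T.symm Ω ((q + 2 : ℕ) * s) x ≤ 2 * uFn m T Ω ((q + 2 : ℕ) * s))
    (hu : 4 ≤ d * uFn m T Ω ((q + 1 : ℕ) * s))
    (hMq : momentU m T Ω q s ≤ 2 * factorialProdU m T Ω q s) :
    (q + 2) * ((q + 1) * ∫⁻ x in Ω, UFn T Ω s x ^ q * UFn T.symm Ω ((q + 2 : ℕ) * s) x ∂m) ≤
      d * factorialProdU m T Ω (q + 2) s := by
  set u := uFn m T Ω ((q + 2 : ℕ) * s)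
  set P := factorialProdU m T Ω q s
  calc _ ≤ (q + 2) * ((q + 1) * (2 * u * (2 * P))) := by
        gcongr
        refine (setLIntegral_mul_le_of_ae_le ?_ hV).trans (by gcongr; exact hMq)
        exact (measurable_UFn T.measurable hΩ s).pow_const q
    _ = (q + 2) * u * (4 * ((q + 1) * P)) := by ring
    _ ≤ (q + 2) * u * (d * uFn m T Ω ((q + 1 : ℕ) * s) * ((q + 1) * P)) := by gcongr
    _ = d * factorialProdU m T Ω (q + 2) s := by
        rw [factorialProdU_add_two, factorialProdU_succ]; ring

theorem one_sub_sq_mul_factorialProdU_le (hT : MeasurePreserving T m m) (hΩ : MeasurableSet Ω)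
    (hΩ1 : m Ω = 1) {s : ℝ} (hs : 0 < s) (q : ℕ) {d B : ℝ≥0} (hB : B ≠ 0)
    (hBd : 2 * (q + 2) * (B : ℝ≥0∞) ≤ d / 2)
    (hV : ∀ᵐ x ∂m.restrict Ω,
      UFn T.symm Ω ((q + 2 : ℕ) * s) x ≤ 2 * uFn m T Ω ((q + 2 : ℕ) * s))
    (hbad : m (badSet m T Ω d ((q + 2 : ℕ) * s)) ≤ d / 2 * B ^ (q + 1))
    (hu : 4 ≤ d * uFn m T Ω ((q + 1 : ℕ) * s))
    (hM1 : (1 - d) * factorialProdU m T Ω (q + 1) s ≤ momentU m T Ω (q + 1) s)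
    (hMq : momentU m T Ω q s ≤ 2 * factorialProdU m T Ω q s)
    (hM2 : momentU m T Ω (q + 2) s ≤ 2 * factorialProdU m T Ω (q + 2) s) :
    (1 - d) ^ 2 * factorialProdU m T Ω (q + 2) s ≤
      momentU m T Ω (q + 2) s + 2 * d * factorialProdU m T Ω (q + 2) s := by
  have hP := factorialProdU_add_two (m := m) (T := T) (Ω := Ω) q s
  set w : ℝ := ((q + 2 : ℕ) : ℝ) * s
  set u := uFn m T Ω w
  set A := badSet m T Ω d w
  set U := UFn T Ω s
  set P₁ := factorialProdU m T Ω (q + 1) s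
  set P₂ := factorialProdU m T Ω (q + 2) s
  have hu0 : u ≠ 0 := uFn_ne_zero (by simp [hΩ1]) w
  have hutop : u ≠ ∞ := uFn_ne_top (by simp [hΩ1]) (by positivity)
  have hsplit : momentU m T Ω (q + 1) s =
      ∫⁻ x in Ω \ A, U x ^ (q + 1) ∂m + ∫⁻ x in A, U x ^ (q + 1) ∂m := by
    rw [momentU, ← lintegral_union (measurableSet_badSet hΩ _ _) disjoint_sdiff_left,
      Set.sdiff_union_of_subset (show A ⊆ Ω from Set.inter_subset_left)]
  calc (1 - d) ^ 2 * P₂ = (q + 2) * u * (1 - d) * ((1 - d) * P₁) := by rw [hP]; ring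
    _ ≤ (q + 2) * u * (1 - d) * (∫⁻ x in Ω \ A, U x ^ (q + 1) ∂m + d * P₁) := by
        gcongr
        refine hM1.trans (hsplit.trans_le ?_)
        gcongr
        exact setLIntegral_badSet_pow_le hΩ1 hs q hB hBd hbad hM2
    _ = (q + 2) * ((1 - d) * u * ∫⁻ x in Ω \ A, U x ^ (q + 1) ∂m) + (1 - d) * (d * P₂) := by
        rw [hP]; ring
    _ ≤ (q + 2) * ∫⁻ x in Ω, U x ^ (q + 1) * UFn T.symm Ω w x ∂m + 1 * (d * P₂) := by
        gcongr
        · exact mul_setLIntegral_diff_badSet_le hΩ hu0 hutop d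
            ((measurable_UFn T.measurable hΩ s).pow_const _)
        · exact tsub_le_self
    _ ≤ momentU m T Ω (q + 2) s + d * P₂ + d * P₂ := by
        rw [one_mul]
        refine add_le_add ((setLIntegral_UFn_pow_mul_UFn_symm_le hT hΩ s q).trans ?_) le_rfl
        exact add_le_add le_rfl (mul_setLIntegral_pow_mul_UFn_symm_le hΩ q hV hu hMq)
    _ = momentU m T Ω (q + 2) s + 2 * d * P₂ := by ring

theorem eventually_le_momentU_add_two (hT : MeasurePreserving T m m) (hΩ : MeasurableSet Ω)
    (hΩ1 : m Ω = 1) (hC : Conservative T m)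
    (hmeas : ∀ ε > 0, Tendsto (fun s => m (badSet m T Ω ε s)) (𝓝[>] 0) (𝓝 0))
    (hV : ∀ D > 1, ∀ᶠ s in 𝓝[>] 0, ∀ᵐ x ∂m.restrict Ω, UFn T.symm Ω s x ≤ D * uFn m T Ω s)
    (q : ℕ) (ih : ∀ c < 1, ∀ᶠ s in 𝓝[>] 0,
      c * factorialProdU m T Ω (q + 1) s ≤ momentU m T Ω (q + 1) s) :
    ∀ c < 1, ∀ᶠ s in 𝓝[>] 0, c * factorialProdU m T Ω (q + 2) s ≤ momentU m T Ω (q + 2) s := by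
  intro c hc
  obtain ⟨d, hd, hcd⟩ := ENNReal.exists_pos_add_two_mul_le_one_sub_sq hc
  have hd0 : (d : ℝ≥0∞) ≠ 0 := by simpa using hd.ne'
  set B : ℝ≥0 := d / (4 * (q + 2))
  have hB : B ≠ 0 := (div_pos hd (by positivity)).ne'
  have hBd : 2 * (q + 2) * (B : ℝ≥0∞) ≤ d / 2 := by
    have h : 2 * (q + 2) * B = d / 2 := by simp only [B]; field_simp; ring
    exact_mod_cast h.le
  have hbadpos : (0 : ℝ≥0∞) < d / 2 * B ^ (q + 1) := by
    simp [pos_iff_ne_zero, hd.ne', hB]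
  have hu : ∀ᶠ s in 𝓝[>] 0, 4 < d * uFn m T Ω s := by
    have h := ENNReal.Tendsto.const_mul (a := d) (tendsto_uFn_nhdsGT_zero hC hΩ (by simp [hΩ1]))
      (Or.inl ENNReal.top_ne_zero)
    rw [ENNReal.mul_top hd0] at h
    exact h.eventually_const_lt (by simp)
  filter_upwards [self_mem_nhdsWithin,
    eventually_nhdsGT_zero_mul_left (x := ((q + 2 : ℕ) : ℝ)) (by positivity) (hV 2 one_lt_two),
    eventually_nhdsGT_zero_mul_left (x := ((q + 2 : ℕ) : ℝ)) (by positivity)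
      ((hmeas d (pos_iff_ne_zero.2 hd0)).eventually_lt_const hbadpos),
    eventually_nhdsGT_zero_mul_left (x := ((q + 1 : ℕ) : ℝ)) (by positivity) hu,
    ih (1 - d) (ENNReal.sub_lt_self ENNReal.one_ne_top one_ne_zero hd0),
    eventually_momentU_le hT hΩ hΩ1 hV q 2 one_lt_two,
    eventually_momentU_le hT hΩ hΩ1 hV (q + 2) 2 one_lt_two]
    with s hs hVs hbad hus hM1 hMq hM2
  have hstep :=
    one_sub_sq_mul_factorialProdU_le hT hΩ hΩ1 hs q hB hBd hVs hbad.le hus.le hM1 hMq hM2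
  have hfin : 2 * (d : ℝ≥0∞) * factorialProdU m T Ω (q + 2) s ≠ ∞ :=
    ENNReal.mul_ne_top (ENNReal.mul_ne_top (by simp) ENNReal.coe_ne_top)
      (factorialProdU_ne_top (by simp [hΩ1]) _ hs)
  refine (ENNReal.add_le_add_iff_right hfin).1 ?_
  calc c * factorialProdU m T Ω (q + 2) s + 2 * d * factorialProdU m T Ω (q + 2) s
      = (c + 2 * d) * factorialProdU m T Ω (q + 2) s := by ring
    _ ≤ (1 - d) ^ 2 * factorialProdU m T Ω (q + 2) s := by gcongr
    _ ≤ _ := hstep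

theorem eventually_le_momentU (hT : MeasurePreserving T m m) (hΩ : MeasurableSet Ω)
    (hΩ1 : m Ω = 1) (hC : Conservative T m)
    (hmeas : ∀ ε > 0, Tendsto (fun s => m (badSet m T Ω ε s)) (𝓝[>] 0) (𝓝 0))
    (hV : ∀ D > 1, ∀ᶠ s in 𝓝[>] 0, ∀ᵐ x ∂m.restrict Ω, UFn T.symm Ω s x ≤ D * uFn m T Ω s)
    (p : ℕ) : ∀ c < 1, ∀ᶠ s in 𝓝[>] 0, c * factorialProdU m T Ω p s ≤ momentU m T Ω p s := by
  induction p using Nat.twoStepInduction with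
  | zero =>
    intro c hc
    refine Eventually.of_forall fun s => ?_
    rw [momentU_zero hΩ1, factorialProdU_zero, mul_one]
    exact hc.le
  | one =>
    intro c hc
    refine Eventually.of_forall fun s => ?_
    rw [momentU_one T.measurable hΩ]
    exact mul_le_of_le_one_left' hc.le
  | more q _ ih => exact eventually_le_momentU_add_two hT hΩ hΩ1 hC hmeas hV q ih

end Moments

theorem laplace_moment_asymptotics_general
    {X : Type*} [MeasurableSpace X] (m : Measure X)
    (T : X ≃ᵐ X) (hE : Ergodic (⇑T) m) (hC : Conservative (⇑T) m)
    (Ω : Set X) (hΩ : MeasurableSet Ω) (hΩ1 : m Ω = 1)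
    -- `U_s⁻ / u(s) → 1` in measure on `Ω` as `s → 0+`:
    (hmeas : ∀ ε : ℝ≥0∞, 0 < ε →
      Tendsto (fun s : ℝ => m (Ω ∩ {x | ε ≤
          (UFn (⇑T.symm) Ω s x / uFn m (⇑T) Ω s - 1) +
          (1 - UFn (⇑T.symm) Ω s x / uFn m (⇑T) Ω s)}))
        (𝓝[>] 0) (𝓝 0))
    -- `‖U_s⁻/u(s)‖_{L^∞(Ω)} → 1` as `s → 0+`:
    (hsup : Tendsto
      (fun s : ℝ => essSup (fun x => UFn (⇑T.symm) Ω s x / uFn m (⇑T) Ω s) (m.restrict Ω))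
      (𝓝[>] 0) (𝓝 1)) :
    ∀ p : ℕ,
      Tendsto (fun s : ℝ =>
          (∫⁻ x in Ω, (UFn (⇑T) Ω s x) ^ p ∂m) /
            ((p.factorial : ℝ≥0∞) * ∏ k ∈ Finset.Icc 1 p, uFn m (⇑T) Ω (k * s)))
        (𝓝[>] 0) (𝓝 1) := by
  have hT : MeasurePreserving T m m := hE.toMeasurePreserving
  have hΩ0 : m Ω ≠ 0 := by simp [hΩ1]
  have hV (D : ℝ≥0∞) (hD : 1 < D) :
      ∀ᶠ s in 𝓝[>] 0, ∀ᵐ x ∂m.restrict Ω, UFn T.symm Ω s x ≤ D * uFn m T Ω s :=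
    eventually_ae_le_mul_of_tendsto_essSup (.of_forall (uFn_ne_zero hΩ0)) hsup hD
  intro p
  refine tendsto_div_nhds_one_of_eventually (f := momentU m T Ω p) (g := factorialProdU m T Ω p)
    ?_ (eventually_le_momentU hT hΩ hΩ1 hC hmeas hV p) (eventually_momentU_le hT hΩ hΩ1 hV p)
  filter_upwards [self_mem_nhdsWithin] with s hs
  exact ⟨factorialProdU_ne_zero hΩ0 p s, factorialProdU_ne_top (by simp [hΩ1]) p hs⟩

/-- (☙): under the dual ergodicity assumptions on `U_s⁻ := Σ e^{-sn} 1_Ω ∘ T^{-n}`,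
one has `∫_Ω U_s^p dm ~ p! · Π_{k=1}^{p} u(ks)` as `s → 0+`, for every `p`. -/
theorem laplace_moment_asymptotics
    {X : Type*} [MeasurableSpace X] (m : Measure X) [SigmaFinite m]
    (T : X ≃ᵐ X) (hE : Ergodic (⇑T) m) (hC : Conservative (⇑T) m)
    (hinf : m Set.univ = ∞)
    (Ω : Set X) (hΩ : MeasurableSet Ω) (hΩ1 : m Ω = 1)
    -- `U_s⁻ / u(s) → 1` in measure on `Ω` as `s → 0+`:
    (hmeas : ∀ ε : ℝ≥0∞, 0 < ε →
      Tendsto (fun s : ℝ => m (Ω ∩ {x | ε ≤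
          (UFn (⇑T.symm) Ω s x / uFn m (⇑T) Ω s - 1) +
          (1 - UFn (⇑T.symm) Ω s x / uFn m (⇑T) Ω s)}))
        (𝓝[>] 0) (𝓝 0))
    -- `‖U_s⁻/u(s)‖_{L^∞(Ω)} → 1` as `s → 0+`:
    (hsup : Tendsto
      (fun s : ℝ => essSup (fun x => UFn (⇑T.symm) Ω s x / uFn m (⇑T) Ω s) (m.restrict Ω))
      (𝓝[>] 0) (𝓝 1)) :
    ∀ p : ℕ,
      Tendsto (fun s : ℝ =>
          (∫⁻ x in Ω, (UFn (⇑T) Ω s x) ^ p ∂m) /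
            ((p.factorial : ℝ≥0∞) * ∏ k ∈ Finset.Icc 1 p, uFn m (⇑T) Ω (k * s)))
        (𝓝[>] 0) (𝓝 1) :=
  laplace_moment_asymptotics_general m T hE hC Ω hΩ hΩ1 hmeas hsup
end

section
/- Let (X_n)_{n∈ℤ} be a stationary, ℕ-valued stochastic process on a probability space (Ω,P) which is continued fraction mixing with coefficients θ(n) satisfying θ(1)<∞, θ(n)↓0, and fix κ≥1 with θ(κ) < 1/2. Let (c_n)_{n≥1} be positive reals with 2^n·P(X_0 > c_n) ≤ 1/2 for all sufficiently large n. Define B_n := ⋃_{k=2^n+1}^{2^{n+1}} ( {X_{-k} > c_n} ∩ {X_k > c_n} ). Then for all sufficiently large n: (1/(64(2κ+1)))·2^n·P(X_0 > c_n)² ≤ P(B_n) ≤ (1+θ(1))·2^n·P(X_0 > c_n)². -/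
/-!
Write `p = P(X₀ ∈ s)` and `D_k = {X_{-k} ∈ s} ∩ {X_k ∈ s}`. By stationarity every coordinate
event has probability `p`, and mixing across the gap from `-k` to `k` gives
`(1 - θ g) p² ≤ P(D_k) ≤ (1 + θ g) p²` for every gap `1 ≤ g ≤ 2k`; with `g = 1` the union bound
gives the upper estimate. For the lower one, keep only the `N / κ` indices `N + 1 + iκ`, which are
`κ` apart: three applications of the mixing bound give `P(D_a ∩ D_b) ≤ (1 + θ κ)³ p⁴ ≤ 4 p⁴`, and
the Bonferroni inequality together with `N p ≤ 1/2` leaves at least `N p² / (8κ)`.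
-/

open MeasureTheory Filter Set Topology ENNReal

open scoped Finset

theorem sum_sub_sum_inter_le_measureReal_biUnion {Ω ι : Type*} [MeasurableSpace Ω]
    (P : Measure Ω) [IsFiniteMeasure P] [DecidableEq ι] {A : ι → Set Ω}
    (hA : ∀ i, MeasurableSet (A i)) (s : Finset ι) :
    ∑ i ∈ s, P.real (A i) - ∑ i ∈ s, ∑ j ∈ s.erase i, P.real (A i ∩ A j)
      ≤ P.real (⋃ i ∈ s, A i) := by
  induction s using Finset.induction_on with
  | empty => simp
  | @insert a t ha ih =>
    have hunion := measureReal_union_add_inter' (hA a) (measure_ne_top P _)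
      (measure_ne_top P (⋃ i ∈ t, A i))
    have hinter : P.real (A a ∩ ⋃ i ∈ t, A i) ≤ ∑ j ∈ t, P.real (A a ∩ A j) := by
      rw [inter_iUnion₂]
      exact measureReal_biUnion_finset_le t _
    have hpairs : ∑ i ∈ insert a t, ∑ j ∈ (insert a t).erase i, P.real (A i ∩ A j)
        = ∑ j ∈ t, P.real (A a ∩ A j)
          + (∑ i ∈ t, P.real (A i ∩ A a) + ∑ i ∈ t, ∑ j ∈ t.erase i, P.real (A i ∩ A j)) := by
      rw [Finset.sum_insert ha, Finset.erase_insert ha,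
        ← Finset.sum_add_distrib (f := fun i => P.real (A i ∩ A a))]
      congr 1
      refine Finset.sum_congr rfl fun i hi => ?_
      have hai : a ≠ i := ne_of_mem_of_not_mem hi ha |>.symm
      rw [Finset.erase_insert_of_ne hai,
        Finset.sum_insert fun h => ha (Finset.mem_of_mem_erase h)]
    have hnonneg : 0 ≤ ∑ i ∈ t, P.real (A i ∩ A a) :=
      Finset.sum_nonneg fun _ _ => measureReal_nonneg
    rw [Finset.set_biUnion_insert, Finset.sum_insert ha, hpairs]
    linarith

theorem card_mul_sub_card_sq_mul_le_measureReal_biUnion {Ω ι : Type*} [MeasurableSpace Ω]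
    (P : Measure Ω) [IsFiniteMeasure P] [DecidableEq ι] {A : ι → Set Ω}
    (hA : ∀ i, MeasurableSet (A i)) (s : Finset ι) {a b : ℝ} (hb : 0 ≤ b)
    (ha : ∀ i ∈ s, a ≤ P.real (A i))
    (hab : ∀ i ∈ s, ∀ j ∈ s, i ≠ j → P.real (A i ∩ A j) ≤ b) :
    #s * a - #s ^ 2 * b ≤ P.real (⋃ i ∈ s, A i) := by
  have hsingle : #s * a ≤ ∑ i ∈ s, P.real (A i) := by
    simpa using Finset.card_nsmul_le_sum s _ a ha
  have hpairs : ∑ i ∈ s, ∑ j ∈ s.erase i, P.real (A i ∩ A j) ≤ #s ^ 2 * b :=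
    calc ∑ i ∈ s, ∑ j ∈ s.erase i, P.real (A i ∩ A j)
        ≤ ∑ i ∈ s, #s * b := Finset.sum_le_sum fun i hi => by
          refine (Finset.sum_le_card_nsmul _ _ b fun j hj =>
            hab i hi j (Finset.mem_of_mem_erase hj) (Finset.ne_of_mem_erase hj).symm).trans ?_
          rw [nsmul_eq_mul]
          exact mul_le_mul_of_nonneg_right (by exact_mod_cast Finset.card_erase_le) hb
      _ = #s ^ 2 * b := by simp only [Finset.sum_const, nsmul_eq_mul]; ring
  linarith [sum_sub_sum_inter_le_measureReal_biUnion P hA s]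

section Mixing

variable {Ω α : Type*} [MeasurableSpace α]

abbrev pastMeasurableSpace (X : ℤ → Ω → α) (k : ℤ) : MeasurableSpace Ω :=
  ⨆ j ∈ Iic k, MeasurableSpace.comap (X j) inferInstance

abbrev futureMeasurableSpace (X : ℤ → Ω → α) (k : ℤ) : MeasurableSpace Ω :=
  ⨆ j ∈ Ici k, MeasurableSpace.comap (X j) inferInstance

variable {X : ℤ → Ω → α} {s : Set α}

theorem measurableSet_pastMeasurableSpace_preimage {j k : ℤ} (hjk : j ≤ k)
    (hs : MeasurableSet s) : MeasurableSet[pastMeasurableSpace X k] (X j ⁻¹' s) :=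
  le_biSup (fun i => MeasurableSpace.comap (X i) inferInstance) (mem_Iic.2 hjk) _
    ⟨s, hs, rfl⟩

theorem measurableSet_futureMeasurableSpace_preimage {j k : ℤ} (hkj : k ≤ j)
    (hs : MeasurableSet s) : MeasurableSet[futureMeasurableSpace X k] (X j ⁻¹' s) :=
  le_biSup (fun i => MeasurableSpace.comap (X i) inferInstance) (mem_Ici.2 hkj) _
    ⟨s, hs, rfl⟩

variable [MeasurableSpace Ω]

def IsStationaryProcess (P : Measure Ω) (X : ℤ → Ω → α) : Prop :=
  ∀ (j : ℤ) (n : ℕ) (A : Set (Fin n → α)), MeasurableSet A →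
    P {ω | (fun i : Fin n => X (j + (i : ℕ)) ω) ∈ A}
      = P {ω | (fun i : Fin n => X ((i : ℕ) : ℤ) ω) ∈ A}

/-- `θ n ≥ |P(A ∩ B) / (P A * P B) - 1|` for past `A` and future `B` at distance `n`, with the
denominators cleared. -/
def CFMixingCoeffBound (P : Measure Ω) (X : ℤ → Ω → α) (θ : ℕ → ℝ) : Prop :=
  ∀ (n : ℕ) (k : ℤ) (A B : Set Ω), 1 ≤ n →
    MeasurableSet[pastMeasurableSpace X k] A →
    MeasurableSet[futureMeasurableSpace X (k + n)] B →
    |P.real (A ∩ B) - P.real A * P.real B| ≤ θ n * P.real A * P.real B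

variable {P : Measure Ω} {θ : ℕ → ℝ}

theorem IsStationaryProcess.measureReal_preimage (h : IsStationaryProcess P X)
    (hs : MeasurableSet s) (j : ℤ) : P.real (X j ⁻¹' s) = P.real (X 0 ⁻¹' s) := by
  have := h j 1 ((fun f => f 0) ⁻¹' s) (measurable_pi_apply 0 hs)
  simp only [mem_preimage, Fin.val_zero, Nat.cast_zero, add_zero] at this
  exact congrArg ENNReal.toReal this

theorem CFMixingCoeffBound.measureReal_inter_le (h : CFMixingCoeffBound P X θ) {n : ℕ}
    {k : ℤ} {A B : Set Ω} (hn : 1 ≤ n) (hA : MeasurableSet[pastMeasurableSpace X k] A)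
    (hB : MeasurableSet[futureMeasurableSpace X (k + n)] B) :
    P.real (A ∩ B) ≤ (1 + θ n) * (P.real A * P.real B) := by
  linarith [(abs_le.1 (h n k A B hn hA hB)).2]

theorem CFMixingCoeffBound.le_measureReal_inter (h : CFMixingCoeffBound P X θ) {n : ℕ}
    {k : ℤ} {A B : Set Ω} (hn : 1 ≤ n) (hA : MeasurableSet[pastMeasurableSpace X k] A)
    (hB : MeasurableSet[futureMeasurableSpace X (k + n)] B) :
    (1 - θ n) * (P.real A * P.real B) ≤ P.real (A ∩ B) := by
  linarith [(abs_le.1 (h n k A B hn hA hB)).1]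

end Mixing

section TwoSidedEvent

variable {Ω α : Type*} [MeasurableSpace Ω] [MeasurableSpace α]

def twoSidedEvent (X : ℤ → Ω → α) (s : Set α) (k : ℤ) : Set Ω :=
  X (-k) ⁻¹' s ∩ X k ⁻¹' s

variable {P : Measure Ω} {X : ℤ → Ω → α} {θ : ℕ → ℝ} {s : Set α}

theorem measureReal_twoSidedEvent_le (hstat : IsStationaryProcess P X)
    (hmix : CFMixingCoeffBound P X θ) (hs : MeasurableSet s) {g : ℕ} {k : ℤ} (hg : 1 ≤ g)
    (hgk : g ≤ 2 * k) :
    P.real (twoSidedEvent X s k) ≤ (1 + θ g) * P.real (X 0 ⁻¹' s) ^ 2 := by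
  have := hmix.measureReal_inter_le (k := -k) hg
    (measurableSet_pastMeasurableSpace_preimage le_rfl hs)
    (measurableSet_futureMeasurableSpace_preimage (j := k) (by omega) hs)
  rwa [hstat.measureReal_preimage hs (-k), hstat.measureReal_preimage hs k, ← sq] at this

theorem le_measureReal_twoSidedEvent (hstat : IsStationaryProcess P X)
    (hmix : CFMixingCoeffBound P X θ) (hs : MeasurableSet s) {g : ℕ} {k : ℤ} (hg : 1 ≤ g)
    (hgk : g ≤ 2 * k) :
    (1 - θ g) * P.real (X 0 ⁻¹' s) ^ 2 ≤ P.real (twoSidedEvent X s k) := by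
  have := hmix.le_measureReal_inter (k := -k) hg
    (measurableSet_pastMeasurableSpace_preimage le_rfl hs)
    (measurableSet_futureMeasurableSpace_preimage (j := k) (by omega) hs)
  rwa [hstat.measureReal_preimage hs (-k), hstat.measureReal_preimage hs k, ← sq] at this

theorem measureReal_twoSidedEvent_inter_le (hstat : IsStationaryProcess P X)
    (hmix : CFMixingCoeffBound P X θ) (hs : MeasurableSet s) {g : ℕ} {a b : ℤ} (hg : 1 ≤ g)
    (hθg : 0 ≤ θ g) (hga : g ≤ 2 * a) (hab : a + g ≤ b) :
    P.real (twoSidedEvent X s a ∩ twoSidedEvent X s b)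
      ≤ (1 + θ g) ^ 3 * P.real (X 0 ⁻¹' s) ^ 4 := by
  have hE (j : ℤ) : P.real (X j ⁻¹' s) = P.real (X 0 ⁻¹' s) := hstat.measureReal_preimage hs j
  have hpast {j k : ℤ} (h : j ≤ k) := measurableSet_pastMeasurableSpace_preimage (X := X) h hs
  have hfuture {j k : ℤ} (h : k ≤ j) :=
    measurableSet_futureMeasurableSpace_preimage (X := X) h hs
  -- adjoin the four coordinates from left to right, each time across a gap of at least `g`
  have h₁ := hmix.measureReal_inter_le hg (hpast (j := -b) le_rfl)
    (hfuture (j := -a) (by omega))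
  have h₂ := hmix.measureReal_inter_le hg
    ((hpast (j := -b) (k := -a) (by omega)).inter (hpast le_rfl)) (hfuture (j := a) (by omega))
  have h₃ := hmix.measureReal_inter_le hg
    (((hpast (j := -b) (k := a) (by omega)).inter (hpast (j := -a) (by omega))).inter
      (hpast le_rfl)) (hfuture (j := b) (by omega))
  have hreorder : twoSidedEvent X s a ∩ twoSidedEvent X s b
      = X (-b) ⁻¹' s ∩ X (-a) ⁻¹' s ∩ X a ⁻¹' s ∩ X b ⁻¹' s := by
    ext; simp only [twoSidedEvent, mem_inter_iff]; tauto
  rw [hE (-b), hE (-a)] at h₁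
  rw [hE a] at h₂
  rw [hE b] at h₃
  set p := P.real (X 0 ⁻¹' s)
  have hθ : 0 ≤ 1 + θ g := by linarith
  calc P.real (twoSidedEvent X s a ∩ twoSidedEvent X s b)
      = P.real (X (-b) ⁻¹' s ∩ X (-a) ⁻¹' s ∩ X a ⁻¹' s ∩ X b ⁻¹' s) := by rw [hreorder]
    _ ≤ (1 + θ g) * (P.real (X (-b) ⁻¹' s ∩ X (-a) ⁻¹' s ∩ X a ⁻¹' s) * p) := h₃
    _ ≤ (1 + θ g) * ((1 + θ g) * (P.real (X (-b) ⁻¹' s ∩ X (-a) ⁻¹' s) * p) * p) := by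
      gcongr
    _ ≤ (1 + θ g) * ((1 + θ g) * ((1 + θ g) * (p * p) * p) * p) := by gcongr
    _ = (1 + θ g) ^ 3 * p ^ 4 := by ring

theorem measureReal_biUnion_twoSidedEvent_le (hstat : IsStationaryProcess P X)
    (hmix : CFMixingCoeffBound P X θ) (hs : MeasurableSet s) (N : ℕ) :
    P.real (⋃ k ∈ Finset.Icc ((N : ℤ) + 1) (2 * N), twoSidedEvent X s k)
      ≤ (1 + θ 1) * N * P.real (X 0 ⁻¹' s) ^ 2 := by
  have hcard : #(Finset.Icc ((N : ℤ) + 1) (2 * N)) = N := by rw [Int.card_Icc]; omega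
  calc P.real (⋃ k ∈ Finset.Icc ((N : ℤ) + 1) (2 * N), twoSidedEvent X s k)
      ≤ ∑ k ∈ Finset.Icc ((N : ℤ) + 1) (2 * N), P.real (twoSidedEvent X s k) :=
        measureReal_biUnion_finset_le _ _
    _ ≤ #(Finset.Icc ((N : ℤ) + 1) (2 * N)) • ((1 + θ 1) * P.real (X 0 ⁻¹' s) ^ 2) :=
        Finset.sum_le_card_nsmul _ _ _ fun k hk =>
          measureReal_twoSidedEvent_le hstat hmix hs le_rfl (by simp at hk; omega)
    _ = (1 + θ 1) * N * P.real (X 0 ⁻¹' s) ^ 2 := by rw [hcard, nsmul_eq_mul]; ring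

theorem le_measureReal_biUnion_twoSidedEvent [IsFiniteMeasure P]
    (hX : ∀ j, Measurable (X j)) (hstat : IsStationaryProcess P X)
    (hmix : CFMixingCoeffBound P X θ) (hs : MeasurableSet s) {κ N : ℕ} (hκ : 1 ≤ κ)
    (hθκ : θ κ ≤ 1 / 2) (hθκ₀ : 0 ≤ θ κ) (hN : 4 * κ ≤ N)
    (hNp : N * P.real (X 0 ⁻¹' s) ≤ 1 / 2) :
    1 / (8 * κ) * N * P.real (X 0 ⁻¹' s) ^ 2
      ≤ P.real (⋃ k ∈ Finset.Icc ((N : ℤ) + 1) (2 * N), twoSidedEvent X s k) := by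
  set p := P.real (X 0 ⁻¹' s)
  set m := N / κ
  set A : ℕ → Set Ω := fun i => twoSidedEvent X s ((N + 1 + i * κ : ℕ) : ℤ)
  have hmκ : m * κ ≤ N := Nat.div_mul_le_self N κ
  have hm : 4 ≤ m := (Nat.le_div_iff_mul_le hκ).2 hN
  have hsub : ⋃ i ∈ Finset.range m, A i
      ⊆ ⋃ k ∈ Finset.Icc ((N : ℤ) + 1) (2 * N), twoSidedEvent X s k := by
    refine iUnion₂_subset fun i hi => subset_biUnion_of_mem (u := fun k => twoSidedEvent X s k) ?_
    have : i * κ + κ ≤ m * κ := by nlinarith [Finset.mem_range.1 hi]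
    simp only [Finset.coe_Icc, mem_Icc]
    constructor <;> norm_cast <;> omega
  have hsingle : ∀ i ∈ Finset.range m, p ^ 2 / 2 ≤ P.real (A i) := fun i _ => by
    have := le_measureReal_twoSidedEvent hstat hmix hs
      (k := ((N + 1 + i * κ : ℕ) : ℤ)) hκ (by norm_cast; omega)
    nlinarith [sq_nonneg p]
  have hordered {i j : ℕ} (hij : i < j) : P.real (A i ∩ A j) ≤ 4 * p ^ 4 := by
    have hgap : i * κ + κ ≤ j * κ := by nlinarith
    have := measureReal_twoSidedEvent_inter_le hstat hmix hs
      (a := ((N + 1 + i * κ : ℕ) : ℤ)) (b := ((N + 1 + j * κ : ℕ) : ℤ)) hκ hθκ₀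
      (by norm_cast; omega) (by norm_cast; omega)
    calc P.real (A i ∩ A j) ≤ (1 + θ κ) ^ 3 * p ^ 4 := this
      _ ≤ (3 / 2) ^ 3 * p ^ 4 := by gcongr; linarith
      _ ≤ 4 * p ^ 4 := by gcongr; norm_num
  have hpair : ∀ i ∈ Finset.range m, ∀ j ∈ Finset.range m, i ≠ j →
      P.real (A i ∩ A j) ≤ 4 * p ^ 4 := fun i _ j _ hij => by
    rcases hij.lt_or_gt with hij | hji
    · exact hordered hij
    · rw [inter_comm]; exact hordered hji
  have hbonf := card_mul_sub_card_sq_mul_le_measureReal_biUnion P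
    (fun i => ((hX _) hs).inter ((hX _) hs)) (Finset.range m) (by positivity) hsingle hpair
  rw [Finset.card_range] at hbonf
  have hNm : N ≤ 2 * m * κ := by
    have : N < κ * (m + 1) := Nat.lt_mul_div_succ N (by omega)
    nlinarith
  have hNmR : (N : ℝ) ≤ 2 * m * κ := by exact_mod_cast hNm
  have hmN : (m : ℝ) ≤ N := by exact_mod_cast Nat.div_le_self N κ
  have hm4 : (4 : ℝ) ≤ m := by exact_mod_cast hm
  have hκR : (1 : ℝ) ≤ κ := by exact_mod_cast hκ
  have hp : 0 ≤ p := measureReal_nonneg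
  have hmp : m * p ≤ 1 / 2 := by nlinarith
  calc 1 / (8 * κ) * N * p ^ 2 ≤ m * p ^ 2 / 4 := by
        rw [one_div_mul_eq_div, div_mul_eq_mul_div, div_le_iff₀ (by positivity)]
        nlinarith [sq_nonneg p]
    _ ≤ m * (p ^ 2 / 2) - m ^ 2 * (4 * p ^ 4) := by
        have : 4 * (m * p) ^ 2 ≤ 1 := by nlinarith [mul_nonneg (Nat.cast_nonneg m) hp]
        nlinarith [mul_le_mul_of_nonneg_right this (sq_nonneg p),
          mul_le_mul_of_nonneg_right hm4 (sq_nonneg p)]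
    _ ≤ P.real (⋃ i ∈ Finset.range m, A i) := hbonf
    _ ≤ P.real (⋃ k ∈ Finset.Icc ((N : ℤ) + 1) (2 * N), twoSidedEvent X s k) :=
        measureReal_mono hsub (measure_ne_top P _)

end TwoSidedEvent

theorem two_sided_exceedance_probability_bounds_general
    {Ω : Type*} [MeasurableSpace Ω] (P : Measure Ω) [IsProbabilityMeasure P]
    (X : ℤ → Ω → ℕ) (hXm : ∀ j, Measurable (X j))
    -- stationarity (two-sided):
    (hstat : ∀ (j : ℤ) (n : ℕ) (A : Set (Fin n → ℕ)), MeasurableSet A →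
      P {ω | (fun i : Fin n => X (j + (i : ℕ)) ω) ∈ A}
        = P {ω | (fun i : Fin n => X ((i : ℕ) : ℤ) ω) ∈ A})
    -- continued fraction mixing with coefficients `θ`:
    (θ : ℕ → ℝ) (hθnn : ∀ n, 0 ≤ θ n)
    (hmix : ∀ (n : ℕ) (k : ℤ) (A B : Set Ω), 1 ≤ n →
      MeasurableSet[⨆ j ∈ Set.Iic k, MeasurableSpace.comap (X j) inferInstance] A →
      MeasurableSet[⨆ j ∈ Set.Ici (k + n), MeasurableSpace.comap (X j) inferInstance] B →
      |(P (A ∩ B)).toReal - (P A).toReal * (P B).toReal|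
        ≤ θ n * (P A).toReal * (P B).toReal)
    (κ : ℕ) (hκ : 1 ≤ κ) (hθκ : θ κ < 1 / 2)
    (c : ℕ → ℝ)
    (hsmall : ∀ᶠ n : ℕ in atTop,
      (2 : ℝ) ^ n * (P {ω | c n < (X 0 ω : ℝ)}).toReal ≤ 1 / 2) :
    ∀ᶠ n : ℕ in atTop,
      (1 / (64 * (2 * (κ : ℝ) + 1))) * 2 ^ n * (P {ω | c n < (X 0 ω : ℝ)}).toReal ^ 2
        ≤ (P (⋃ k ∈ Finset.Icc (2 ^ n + 1) (2 ^ (n + 1)),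
            ({ω | c n < (X (-(k : ℤ)) ω : ℝ)} ∩ {ω | c n < (X (k : ℤ) ω : ℝ)}))).toReal ∧
      (P (⋃ k ∈ Finset.Icc (2 ^ n + 1) (2 ^ (n + 1)),
            ({ω | c n < (X (-(k : ℤ)) ω : ℝ)} ∩ {ω | c n < (X (k : ℤ) ω : ℝ)}))).toReal
        ≤ (1 + θ 1) * 2 ^ n * (P {ω | c n < (X 0 ω : ℝ)}).toReal ^ 2 := by
  have hbig : ∀ᶠ n : ℕ in atTop, 4 * κ ≤ 2 ^ n :=
    (tendsto_pow_atTop_atTop_of_one_lt (one_lt_two : 1 < 2)).eventually_ge_atTop _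
  filter_upwards [hsmall, hbig] with n hp hN
  have hs : MeasurableSet {m : ℕ | c n < m} := .of_discrete
  have hlower := le_measureReal_biUnion_twoSidedEvent hXm hstat hmix hs hκ hθκ.le (hθnn κ) hN
    (by exact_mod_cast hp)
  have hupper := measureReal_biUnion_twoSidedEvent_le hstat hmix hs (2 ^ n)
  rw [pow_succ' (2 : ℤ)]
  push_cast at hlower hupper
  refine ⟨le_trans ?_ hlower, hupper⟩
  have hκR : (1 : ℝ) ≤ κ := by exact_mod_cast hκ
  have hconst : 1 / (64 * (2 * (κ : ℝ) + 1)) ≤ 1 / (8 * κ) := by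
    gcongr <;> linarith
  exact mul_le_mul_of_nonneg_right (mul_le_mul_of_nonneg_right hconst (by positivity))
    (sq_nonneg _)

/-- Borel–Cantelli-type estimate (⌁) for the two-sided exceedance events
`B_n = ⋃_{k=2^n+1}^{2^{n+1}} ({X_{-k} > c_n} ∩ {X_k > c_n})` of a stationary,
continued fraction mixing, ℕ-valued process. -/
theorem two_sided_exceedance_probability_bounds
    {Ω : Type*} [MeasurableSpace Ω] (P : Measure Ω) [IsProbabilityMeasure P]
    (X : ℤ → Ω → ℕ) (hXm : ∀ j, Measurable (X j))
    -- stationarity (two-sided):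
    (hstat : ∀ (j : ℤ) (n : ℕ) (A : Set (Fin n → ℕ)), MeasurableSet A →
      P {ω | (fun i : Fin n => X (j + (i : ℕ)) ω) ∈ A}
        = P {ω | (fun i : Fin n => X ((i : ℕ) : ℤ) ω) ∈ A})
    -- continued fraction mixing with coefficients `θ`:
    (θ : ℕ → ℝ) (hθnn : ∀ n, 0 ≤ θ n) (hθanti : Antitone θ)
    (hθ0 : Tendsto θ atTop (𝓝 0))
    (hmix : ∀ (n : ℕ) (k : ℤ) (A B : Set Ω), 1 ≤ n →
      MeasurableSet[⨆ j ∈ Set.Iic k, MeasurableSpace.comap (X j) inferInstance] A →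
      MeasurableSet[⨆ j ∈ Set.Ici (k + n), MeasurableSpace.comap (X j) inferInstance] B →
      |(P (A ∩ B)).toReal - (P A).toReal * (P B).toReal|
        ≤ θ n * (P A).toReal * (P B).toReal)
    (κ : ℕ) (hκ : 1 ≤ κ) (hθκ : θ κ < 1 / 2)
    (c : ℕ → ℝ) (hc : ∀ n, 0 < c n)
    (hsmall : ∀ᶠ n : ℕ in atTop,
      (2 : ℝ) ^ n * (P {ω | c n < (X 0 ω : ℝ)}).toReal ≤ 1 / 2) :
    ∀ᶠ n : ℕ in atTop,
      (1 / (64 * (2 * (κ : ℝ) + 1))) * 2 ^ n * (P {ω | c n < (X 0 ω : ℝ)}).toReal ^ 2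
        ≤ (P (⋃ k ∈ Finset.Icc (2 ^ n + 1) (2 ^ (n + 1)),
            ({ω | c n < (X (-(k : ℤ)) ω : ℝ)} ∩ {ω | c n < (X (k : ℤ) ω : ℝ)}))).toReal ∧
      (P (⋃ k ∈ Finset.Icc (2 ^ n + 1) (2 ^ (n + 1)),
            ({ω | c n < (X (-(k : ℤ)) ω : ℝ)} ∩ {ω | c n < (X (k : ℤ) ω : ℝ)}))).toReal
        ≤ (1 + θ 1) * 2 ^ n * (P {ω | c n < (X 0 ω : ℝ)}).toReal ^ 2 :=
  two_sided_exceedance_probability_bounds_general P X hXm hstat θ hθnn hmix κ hκ hθκ c hsmall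
end
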